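/- arXiv:0911.0871 — 5 statements merged into one kernel-verified Lean document; each statement's English description precedes it below -/
import Mathlib

section
/- Suppose a sequence γ : ℕ → [0,∞) satisfies, for fixed constants c₁ ∈ (0,1), C₁ > 0, λ ∈ (0,1], ε > 0, the recursive inequality γ(⌊r(1+λ)⌋) ≤ C₁/(√ε · r²) + ε^{3/5} r² γ(r) γ(⌊λr/2⌋) + (1−c₁)γ(r) for all r. If additionally ε = M^{−20/11} where M is chosen so large that (2C₁ + 8λ^{−2})M^{−1/11} ≤ c₁/2, and λ satisfies (1+λ)² ≤ 2 and (1−c₁)(1+λ)² ≤ 1 − c₁/2, then the inductive step holds: if γ(s) ≤ M/s² for all s < r(1+λ), then γ(r(1+λ)) ≤ M/(r(1+λ))². -/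
/-!
Feed the induction hypothesis at `r` and at `λr/2` into the recursion. With `A = M^{-1/11}` the
choice `ε = M^{-20/11}` makes both `ε^{-1/2}` and `ε^{3/5} M²` equal to `M A`, so
`r² γ(r(1+λ)) ≤ (C₁ + 4λ⁻²) M A + (1 - c₁) M`. Multiplying by `(1+λ)² ≤ 2` and using the
choice of `M` and `(1 - c₁)(1+λ)² ≤ 1 - c₁/2` bounds this by `c₁M/2 + (1 - c₁/2)M = M`.
-/

open Real

lemma inv_sqrt_rpow_neg_twenty_div_eleven {M : ℝ} (hM : 0 < M) :
    (√(M ^ (-(20 : ℝ) / 11)))⁻¹ = M * M ^ (-(1 : ℝ) / 11) := by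
  rw [sqrt_eq_rpow, ← rpow_mul hM.le, ← rpow_neg hM.le]
  rw [← rpow_one_add' hM.le (by norm_num)]
  norm_num

lemma rpow_neg_twenty_div_eleven_rpow_mul_sq {M : ℝ} (hM : 0 < M) :
    (M ^ (-(20 : ℝ) / 11)) ^ ((3 : ℝ) / 5) * M ^ 2 = M * M ^ (-(1 : ℝ) / 11) := by
  rw [← rpow_mul hM.le, ← rpow_natCast, ← rpow_add hM]
  rw [← rpow_one_add' hM.le (by norm_num)]
  norm_num

lemma recursion_rhs_le {C s e c M r lam y z : ℝ} (hr : 0 < r) (hlam : 0 < lam) (he : 0 ≤ e)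
    (hc : c ≤ 1) (hM : 0 ≤ M) (hz₀ : 0 ≤ z) (hy : y ≤ M / r ^ 2)
    (hz : z ≤ M / (lam * r / 2) ^ 2) :
    C / (s * r ^ 2) + e * r ^ 2 * y * z + (1 - c) * y
      ≤ (C / s + 4 * lam⁻¹ ^ 2 * (e * M ^ 2) + (1 - c) * M) / r ^ 2 := by
  have hyz : y * z ≤ M / r ^ 2 * (M / (lam * r / 2) ^ 2) :=
    mul_le_mul hy hz hz₀ (by positivity)
  calc C / (s * r ^ 2) + e * r ^ 2 * y * z + (1 - c) * y
      = C / s / r ^ 2 + e * r ^ 2 * (y * z) + (1 - c) * y := by rw [div_div]; ring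
    _ ≤ C / s / r ^ 2 + e * r ^ 2 * (M / r ^ 2 * (M / (lam * r / 2) ^ 2))
          + (1 - c) * (M / r ^ 2) := by gcongr
    _ = (C / s + 4 * lam⁻¹ ^ 2 * (e * M ^ 2) + (1 - c) * M) / r ^ 2 := by field_simp; ring

lemma mul_one_add_sq_le {C c lam A M : ℝ} (hC : 0 ≤ C) (hA : 0 ≤ A) (hM : 0 ≤ M)
    (hCA : (2 * C + 8 * lam⁻¹ ^ 2) * A ≤ c / 2) (hl₁ : (1 + lam) ^ 2 ≤ 2)
    (hl₂ : (1 - c) * (1 + lam) ^ 2 ≤ 1 - c / 2) :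
    (C * (M * A) + 4 * lam⁻¹ ^ 2 * (M * A) + (1 - c) * M) * (1 + lam) ^ 2 ≤ M := by
  have hX : 0 ≤ (C + 4 * lam⁻¹ ^ 2) * A := by positivity
  have h : (C + 4 * lam⁻¹ ^ 2) * A * (1 + lam) ^ 2 + (1 - c) * (1 + lam) ^ 2 ≤ 1 := by
    nlinarith [mul_le_mul_of_nonneg_left hl₁ hX]
  calc (C * (M * A) + 4 * lam⁻¹ ^ 2 * (M * A) + (1 - c) * M) * (1 + lam) ^ 2
      = M * ((C + 4 * lam⁻¹ ^ 2) * A * (1 + lam) ^ 2 + (1 - c) * (1 + lam) ^ 2) := by ring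
    _ ≤ M := mul_le_of_le_one_right hM h

theorem stmt1_general (γ : ℝ → ℝ) (c₁ C₁ lam ε M : ℝ)
    (hγ : ∀ r, 0 ≤ γ r)
    (hc₁' : c₁ < 1) (hC₁ : 0 < C₁)
    (hlam : 0 < lam)
    (hM : 0 < M)
    (hrec : ∀ r : ℝ, 0 < r →
      γ (r * (1 + lam)) ≤ C₁ / (Real.sqrt ε * r ^ 2)
        + ε ^ ((3 : ℝ) / 5) * r ^ 2 * γ r * γ (lam * r / 2) + (1 - c₁) * γ r)
    (hεM : ε = M ^ (-(20 : ℝ) / 11))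
    (hM1 : (2 * C₁ + 8 * lam⁻¹ ^ 2) * M ^ (-(1 : ℝ) / 11) ≤ c₁ / 2)
    (hl1 : (1 + lam) ^ 2 ≤ 2) (hl2 : (1 - c₁) * (1 + lam) ^ 2 ≤ 1 - c₁ / 2)
    (r : ℝ) (hr : 0 < r)
    (hind : ∀ s : ℝ, 0 < s → s < r * (1 + lam) → γ s ≤ M / s ^ 2) :
    γ (r * (1 + lam)) ≤ M / (r * (1 + lam)) ^ 2 := by
  subst hεM
  have hγr : γ r ≤ M / r ^ 2 := hind r hr (by nlinarith)
  have hγs : γ (lam * r / 2) ≤ M / (lam * r / 2) ^ 2 := hind _ (by positivity) (by nlinarith)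
  have hstep := (hrec r hr).trans
    (recursion_rhs_le hr hlam (by positivity) hc₁'.le hM.le (hγ _) hγr hγs)
  rw [div_eq_mul_inv C₁, inv_sqrt_rpow_neg_twenty_div_eleven hM,
    rpow_neg_twenty_div_eleven_rpow_mul_sq hM] at hstep
  calc γ (r * (1 + lam))
      ≤ (C₁ * (M * M ^ (-(1 : ℝ) / 11)) + 4 * lam⁻¹ ^ 2 * (M * M ^ (-(1 : ℝ) / 11))
          + (1 - c₁) * M) * (1 + lam) ^ 2 / (r * (1 + lam)) ^ 2 := by
        rw [mul_pow, mul_div_mul_right _ _ (by positivity)]; exact hstep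
    _ ≤ M / (r * (1 + lam)) ^ 2 := by
        gcongr
        exact mul_one_add_sq_le hC₁.le (by positivity) hM.le hM1 hl1 hl2

/-- The arithmetic induction step of Kozma–Nachmias: from the recursive inequality
`γ(r(1+λ)) ≤ C₁/(√ε r²) + ε^{3/5} r² γ(r) γ(λr/2) + (1−c₁)γ(r)` and the choices
`ε = M^{−20/11}`, `(2C₁+8λ^{−2})M^{−1/11} ≤ c₁/2`, `(1+λ)² ≤ 2`,
`(1−c₁)(1+λ)² ≤ 1 − c₁/2`, the inductive step `γ(s) ≤ M/s²` for all `s < r(1+λ)`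
implies `γ(r(1+λ)) ≤ M/(r(1+λ))²`. -/
theorem stmt1 (γ : ℝ → ℝ) (c₁ C₁ lam ε M : ℝ)
    (hγ : ∀ r, 0 ≤ γ r)
    (hc₁ : 0 < c₁) (hc₁' : c₁ < 1) (hC₁ : 0 < C₁)
    (hlam : 0 < lam) (hlam1 : lam ≤ 1)
    (hε : 0 < ε) (hM : 0 < M)
    (hrec : ∀ r : ℝ, 0 < r →
      γ (r * (1 + lam)) ≤ C₁ / (Real.sqrt ε * r ^ 2)
        + ε ^ ((3 : ℝ) / 5) * r ^ 2 * γ r * γ (lam * r / 2) + (1 - c₁) * γ r)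
    (hεM : ε = M ^ (-(20 : ℝ) / 11))
    (hM1 : (2 * C₁ + 8 * lam⁻¹ ^ 2) * M ^ (-(1 : ℝ) / 11) ≤ c₁ / 2)
    (hl1 : (1 + lam) ^ 2 ≤ 2) (hl2 : (1 - c₁) * (1 + lam) ^ 2 ≤ 1 - c₁ / 2)
    (r : ℝ) (hr : 0 < r)
    (hind : ∀ s : ℝ, 0 < s → s < r * (1 + lam) → γ s ≤ M / s ^ 2) :
    γ (r * (1 + lam)) ≤ M / (r * (1 + lam)) ^ 2 :=
  stmt1_general γ c₁ C₁ lam ε M hγ hc₁' hC₁ hlam hM hrec hεM hM1 hl1 hl2 r hr hind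
end

section
/- Assume the two-point function lower bound P_{p_c}(0 ↔ x) ≥ c|x|^{2−d} for x ∈ Q_{2r}∖Q_r and the upper bound of the previous statement. Then P_{p_c}(0 ↔ ∂Q_r) ≥ c'/r² for all r > 0, for some constant c' > 0. -/
open MeasureTheory ProbabilityTheory
/-- Vertices of the lattice `ℤ^d`. -/
abbrev Vd (d : ℕ) := Fin d → ℤ

/-- A percolation configuration: each (unordered) edge is open (`true`) or closed. -/
abbrev Config (d : ℕ) := Sym2 (Vd d) → Bool

/-- The cube `Q_r = {−r,…,r}^d`. -/
def cube (d r : ℕ) : Set (Vd d) := {x | ∀ i, |x i| ≤ (r : ℤ)}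

/-- The internal boundary `∂Q_r`: vertices of `Q_r` with an edge leaving `Q_r`. -/
def inBdry (d : ℕ) (E : Set (Sym2 (Vd d))) (r : ℕ) : Set (Vd d) :=
  {z | z ∈ cube d r ∧ ∃ w, w ∉ cube d r ∧ s(z, w) ∈ E}

/-- `a` is connected to `b` by an open path staying inside `S`. -/
def ConnIn (d : ℕ) (E : Set (Sym2 (Vd d))) (ω : Config d) (S : Set (Vd d))
    (a b : Vd d) : Prop :=
  ∃ n : ℕ, ∃ γ : ℕ → Vd d, γ 0 = a ∧ γ n = b ∧ (∀ i ≤ n, γ i ∈ S) ∧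
    ∀ i < n, s(γ i, γ (i + 1)) ∈ E ∧ ω s(γ i, γ (i + 1)) = true

/-- `μ` is Bernoulli bond percolation with parameter `p` on the edge set `E`:
a probability measure under which the edge states are independent and each
edge of `E` is open with probability `p`. -/
def IsBernoulli (d : ℕ) (E : Set (Sym2 (Vd d))) (p : ℝ)
    (μ : Measure (Config d)) : Prop :=
  IsProbabilityMeasure μ ∧
  iIndepFun (fun e (ω : Config d) => ω e) μ ∧
  ∀ e ∈ E, μ {ω | ω e = true} = ENNReal.ofReal p

/-- The Euclidean norm of a lattice point. -/
noncomputable def euclNorm (d : ℕ) (x : Vd d) : ℝ :=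
  Real.sqrt (∑ i, ((x i : ℝ)) ^ 2)
/-!
Let `X` count the vertices `x ∈ Q_{2r} ∖ Q_r` with `0 ↔ x`. The two-point lower bound and
`|Q_{2r} ∖ Q_r| ≥ r^d` give `E X ≥ c₁ r²`, the tree-graph bound on `Q_{2r}` gives `E X² ≤ 64 C r⁶`,
and `X > 0` forces `0 ↔ ∂Q_r`, since an open path from `0` to `x ∉ Q_r` crosses `∂Q_r`.
Cauchy–Schwarz, `(E X)² ≤ P(X > 0) · E X²`, then yields `P(0 ↔ ∂Q_r) ≥ c₁² / (64 C r²)`.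
-/

open Finset
open scoped ENNReal

theorem sq_lintegral_le_measure_mul_lintegral_sq {α : Type*} [MeasurableSpace α] {μ : Measure α}
    {f : α → ℝ≥0∞} (hf : AEMeasurable f μ) {U : Set α} (hU : MeasurableSet U)
    (hfU : ∀ a ∉ U, f a = 0) :
    (∫⁻ a, f a ∂μ) ^ 2 ≤ μ U * ∫⁻ a, f a ^ 2 ∂μ := by
  have hfg : f * U.indicator 1 = f := by
    ext a
    by_cases ha : a ∈ U <;> simp [ha, hfU]
  have hg : ∀ a, U.indicator (1 : α → ℝ≥0∞) a ^ (2 : ℝ) = U.indicator 1 a := by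
    intro a
    by_cases ha : a ∈ U <;> simp [ha]
  have holder := ENNReal.lintegral_mul_le_Lp_mul_Lq μ .two_two hf
    ((measurable_one.indicator hU).aemeasurable)
  simp only [hfg, hg, lintegral_indicator_one hU, ENNReal.rpow_two] at holder
  calc (∫⁻ a, f a ∂μ) ^ 2
      ≤ ((∫⁻ a, f a ^ 2 ∂μ) ^ (1 / 2 : ℝ) * μ U ^ (1 / 2 : ℝ)) ^ 2 := pow_le_pow_left' holder 2
    _ = μ U * ∫⁻ a, f a ^ 2 ∂μ := by
      rw [mul_pow, ← ENNReal.rpow_natCast, ← ENNReal.rpow_natCast (μ U ^ _), ← ENNReal.rpow_mul,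
        ← ENNReal.rpow_mul]
      norm_num [mul_comm]

theorem sq_sum_measure_le_measure_biUnion_mul_sum_measure_inter {α ι : Type*} [MeasurableSpace α]
    (μ : Measure α) (s : Finset ι) {A : ι → Set α} (hA : ∀ i, MeasurableSet (A i)) :
    (∑ i ∈ s, μ (A i)) ^ 2 ≤ μ (⋃ i ∈ s, A i) * ∑ i ∈ s, ∑ j ∈ s, μ (A i ∩ A j) := by
  classical
  set X : α → ℝ≥0∞ := fun a => ∑ i ∈ s, (A i).indicator 1 a
  have hX : Measurable X := measurable_sum _ fun i _ => measurable_one.indicator (hA i)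
  have hXU : ∀ a ∉ ⋃ i ∈ s, A i, X a = 0 := by
    intro a ha
    simp only [Set.mem_iUnion, not_exists] at ha
    exact sum_eq_zero fun i hi => Set.indicator_of_notMem (ha i hi) _
  have hEX : ∫⁻ a, X a ∂μ = ∑ i ∈ s, μ (A i) := by
    rw [lintegral_finsetSum _ fun i _ => measurable_one.indicator (hA i)]
    simp only [lintegral_indicator_one (hA _)]
  have hEX2 : ∫⁻ a, X a ^ 2 ∂μ = ∑ i ∈ s, ∑ j ∈ s, μ (A i ∩ A j) := by
    have hsq : ∀ a, X a ^ 2 = ∑ i ∈ s, ∑ j ∈ s, (A i ∩ A j).indicator 1 a := fun a => by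
      simp only [X, sq, sum_mul_sum, Set.inter_indicator_one, Pi.mul_apply]
    simp only [hsq]
    rw [lintegral_finsetSum _ fun i _ => measurable_sum _ fun j _ =>
      measurable_one.indicator ((hA i).inter (hA j))]
    refine sum_congr rfl fun i _ => ?_
    rw [lintegral_finsetSum _ fun j _ => measurable_one.indicator ((hA i).inter (hA j))]
    simp only [lintegral_indicator_one ((hA _).inter (hA _))]
  have := sq_lintegral_le_measure_mul_lintegral_sq (μ := μ) hX.aemeasurable
    (measurableSet_biUnion s fun i _ => hA i) hXU
  rwa [hEX, hEX2] at this

theorem sq_sum_measureReal_le {α ι : Type*} [MeasurableSpace α] (μ : Measure α) [IsFiniteMeasure μ]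
    (s : Finset ι) {A : ι → Set α} (hA : ∀ i, MeasurableSet (A i)) {B : Set α}
    (hAB : ∀ i ∈ s, A i ⊆ B) :
    (∑ i ∈ s, μ.real (A i)) ^ 2 ≤ μ.real B * ∑ i ∈ s, ∑ j ∈ s, μ.real (A i ∩ A j) := by
  have h := ENNReal.toReal_mono (ENNReal.mul_ne_top (measure_ne_top μ _)
      (ENNReal.sum_ne_top.2 fun _ _ => ENNReal.sum_ne_top.2 fun _ _ => measure_ne_top μ _))
    (sq_sum_measure_le_measure_biUnion_mul_sum_measure_inter μ s hA)
  simp only [ENNReal.toReal_pow, ENNReal.toReal_mul,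
    ENNReal.toReal_sum fun _ _ => measure_ne_top μ _, ENNReal.toReal_sum fun _ _ =>
      ENNReal.sum_ne_top.2 fun _ _ => measure_ne_top μ _] at h
  exact h.trans (mul_le_mul_of_nonneg_right (measureReal_mono (Set.iUnion₂_subset hAB))
    (sum_nonneg fun _ _ => sum_nonneg fun _ _ => measureReal_nonneg))

noncomputable def cubeFinset (d r : ℕ) : Finset (Vd d) :=
  Fintype.piFinset fun _ => Icc (-(r : ℤ)) r

theorem coe_cubeFinset (d r : ℕ) : (cubeFinset d r : Set (Vd d)) = cube d r := by
  ext x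
  simp [cubeFinset, cube, abs_le, Pi.le_def, forall_and]

theorem mem_cubeFinset {d r : ℕ} {x : Vd d} : x ∈ cubeFinset d r ↔ x ∈ cube d r := by
  rw [← coe_cubeFinset, mem_coe]

theorem card_cubeFinset (d r : ℕ) : #(cubeFinset d r) = (2 * r + 1) ^ d := by
  simp only [cubeFinset, Fintype.card_piFinset, Int.card_Icc, prod_const, card_univ,
    Fintype.card_fin]
  congr 1
  omega

theorem cubeFinset_subset_cubeFinset {d r R : ℕ} (h : r ≤ R) : cubeFinset d r ⊆ cubeFinset d R := by
  intro x hx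
  simp only [cubeFinset, Fintype.mem_piFinset, mem_Icc] at hx ⊢
  exact fun i => ⟨by linarith [(hx i).1], by linarith [(hx i).2]⟩

theorem pow_le_card_cubeFinset_sdiff {d : ℕ} (hd : d ≠ 0) (r : ℕ) :
    r ^ d ≤ #(cubeFinset d (2 * r) \ cubeFinset d r) := by
  rw [card_sdiff_of_subset (cubeFinset_subset_cubeFinset (by omega)), card_cubeFinset,
    card_cubeFinset]
  have : (2 * r + 1) ^ d + r ^ d ≤ (2 * (2 * r) + 1) ^ d :=
    (pow_add_pow_le (by positivity) (by positivity) hd).trans (Nat.pow_le_pow_left (by omega) d)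
  omega

theorem zero_mem_cube (d r : ℕ) : (0 : Vd d) ∈ cube d r := fun i => by simp

theorem euclNorm_le_of_mem_cube {d r : ℕ} {x : Vd d} (hx : x ∈ cube d r) :
    euclNorm d x ≤ √d * r := by
  have hcoord : ∀ i, ((x i : ℝ)) ^ 2 ≤ (r : ℝ) ^ 2 := fun i => by
    rw [← sq_abs, ← Int.cast_abs]
    exact pow_le_pow_left₀ (by positivity) (by exact_mod_cast hx i) 2
  calc euclNorm d x ≤ √(∑ _i : Fin d, (r : ℝ) ^ 2) :=
        Real.sqrt_le_sqrt (sum_le_sum fun i _ => hcoord i)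
    _ = √d * r := by simp [Real.sqrt_mul, Real.sqrt_sq]

theorem euclNorm_pos {d : ℕ} {x : Vd d} (hx : x ≠ 0) : 0 < euclNorm d x := by
  obtain ⟨i, hi⟩ := Function.ne_iff.1 hx
  have hi' : (0 : ℝ) < (x i : ℝ) ^ 2 := by
    have : (x i : ℝ) ≠ 0 := by exact_mod_cast hi
    positivity
  exact Real.sqrt_pos.2
    (hi'.trans_le (single_le_sum (fun j _ => sq_nonneg ((x j : ℝ))) (mem_univ i)))

theorem measurableSet_connIn (d : ℕ) (E : Set (Sym2 (Vd d))) (S : Set (Vd d)) (a b : Vd d) :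
    MeasurableSet {ω : Config d | ConnIn d E ω S a b} := by
  -- an open path of length `n` only sees its first `n + 1` vertices, so countably many suffice
  have hcount : {ω : Config d | ConnIn d E ω S a b} =
      ⋃ (n : ℕ) (v : Fin (n + 1) → Vd d), {ω : Config d |
        let γ : ℕ → Vd d := fun i => v ⟨min i n, by omega⟩
        γ 0 = a ∧ γ n = b ∧ (∀ i ≤ n, γ i ∈ S) ∧
          ∀ i < n, s(γ i, γ (i + 1)) ∈ E ∧ ω s(γ i, γ (i + 1)) = true} := by
    ext ω
    simp only [Set.mem_ofPred_eq, Set.mem_iUnion]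
    constructor
    · rintro ⟨n, γ, h0, hn, hS, hpath⟩
      refine ⟨n, fun i => γ i, ?_⟩
      have hmin : ∀ i ≤ n, min i n = i := fun i hi => min_eq_left hi
      refine ⟨by simpa using h0, by simpa using hn, fun i hi => ?_, fun i hi => ?_⟩
      · simpa [hmin i hi] using hS i hi
      · simpa [hmin i hi.le, hmin (i + 1) hi] using hpath i hi
    · rintro ⟨n, v, hv⟩
      exact ⟨n, fun i => v ⟨min i n, by omega⟩, hv⟩
  rw [hcount]
  measurability

theorem exists_inBdry_connIn {d : ℕ} {E : Set (Sym2 (Vd d))} {ω : Config d} {S : Set (Vd d)}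
    {r : ℕ} {a b : Vd d} (ha : a ∈ cube d r) (hb : b ∉ cube d r) (hab : ConnIn d E ω S a b) :
    ∃ z ∈ inBdry d E r, ConnIn d E ω S a z := by
  classical
  obtain ⟨n, γ, h0, hn, hS, hpath⟩ := hab
  have hexit : ∃ i, γ i ∉ cube d r := ⟨n, hn ▸ hb⟩
  -- `γ (k - 1)` is the last vertex before the path first leaves the cube
  set k := Nat.find hexit
  have hk : γ k ∉ cube d r := Nat.find_spec hexit
  have hkn : k ≤ n := Nat.find_min' hexit (hn ▸ hb)
  have hk0 : k ≠ 0 := fun h => hk (h ▸ h0 ▸ ha)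
  have hprev : γ (k - 1) ∈ cube d r := not_not.1 (Nat.find_min hexit (by omega))
  have hstep := hpath (k - 1) (by omega)
  rw [Nat.sub_add_cancel (Nat.pos_of_ne_zero hk0)] at hstep
  exact ⟨γ (k - 1), ⟨hprev, γ k, hk, hstep.1⟩,
    k - 1, γ, h0, rfl, fun i hi => hS i (by omega), fun i hi => hpath i (by omega)⟩

theorem mul_sq_le_sum_annulus {d r : ℕ} (hd : 2 ≤ d) (hr : 0 < r) {c : ℝ} (hc : 0 ≤ c)
    {f : Vd d → ℝ}
    (hf : ∀ x ∈ cube d (2 * r) \ cube d r, c * euclNorm d x ^ ((2 : ℝ) - d) ≤ f x) :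
    c * (2 * √d) ^ ((2 : ℝ) - d) * (r : ℝ) ^ 2 ≤
      ∑ x ∈ cubeFinset d (2 * r) \ cubeFinset d r, f x := by
  have hr' : (0 : ℝ) < r := by exact_mod_cast hr
  have hexp : (2 : ℝ) - d ≤ 0 := by
    have : (2 : ℝ) ≤ d := by exact_mod_cast hd
    linarith
  have hterm : ∀ x ∈ cubeFinset d (2 * r) \ cubeFinset d r,
      c * (2 * √d * r) ^ ((2 : ℝ) - d) ≤ f x := by
    intro x hx
    rw [mem_sdiff, mem_cubeFinset, mem_cubeFinset] at hx
    have hx0 : x ≠ 0 := fun h => hx.2 (h ▸ zero_mem_cube d r)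
    have hnorm : euclNorm d x ≤ 2 * √d * r := by
      have := euclNorm_le_of_mem_cube hx.1
      push_cast at this
      linarith
    exact (mul_le_mul_of_nonneg_left
      (Real.rpow_le_rpow_of_nonpos (euclNorm_pos hx0) hnorm hexp) hc).trans (hf x hx)
  have hcard : (r : ℝ) ^ d ≤ #(cubeFinset d (2 * r) \ cubeFinset d r) := by
    exact_mod_cast pow_le_card_cubeFinset_sdiff (by omega) r
  have hpow : (r : ℝ) ^ d * (r : ℝ) ^ ((2 : ℝ) - d) = (r : ℝ) ^ 2 := by
    rw [← Real.rpow_natCast, ← Real.rpow_add hr']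
    norm_num
  calc c * (2 * √d) ^ ((2 : ℝ) - d) * (r : ℝ) ^ 2
      = (r : ℝ) ^ d * (c * (2 * √d * r) ^ ((2 : ℝ) - d)) := by
        rw [Real.mul_rpow (by positivity) hr'.le, ← hpow]
        ring
    _ ≤ #(cubeFinset d (2 * r) \ cubeFinset d r) * (c * (2 * √d * r) ^ ((2 : ℝ) - d)) :=
        mul_le_mul_of_nonneg_right hcard (by positivity)
    _ ≤ ∑ x ∈ cubeFinset d (2 * r) \ cubeFinset d r, f x := by
        rw [← nsmul_eq_mul]
        exact card_nsmul_le_sum _ _ _ hterm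

theorem sum_sum_le_finsum_cube {d R : ℕ} {s : Finset (Vd d)} (hs : s ⊆ cubeFinset d R)
    {g : Vd d → Vd d → ℝ} (hg : 0 ≤ g) :
    ∑ x ∈ s, ∑ y ∈ s, g x y ≤ ∑ᶠ x ∈ cube d R, ∑ᶠ y ∈ cube d R, g x y := by
  simp only [← coe_cubeFinset, finsum_mem_coe_finset, ← sum_product']
  exact sum_le_sum_of_subset_of_nonneg (product_subset_product hs hs) fun p _ _ => hg p.1 p.2

/-- Second-moment lower bound on the one-arm probability: assuming the two-point
lower bound `P(0 ↔ x) ≥ c|x|^{2−d}` on `Q_{2r}∖Q_r` and the tree-graph upper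
bound `Σ_{x,y ∈ Q_r} P(0 ↔ x, 0 ↔ y) ≤ C r⁶`, one has
`P(0 ↔ ∂Q_r) ≥ c'/r²` for some `c' > 0` and all `r > 0`. -/
theorem stmt7 (d : ℕ) (hd : 6 < d) (E : Set (Sym2 (Vd d))) (p : ℝ)
    (μ : Measure (Config d)) (hbern : IsBernoulli d E p μ)
    (c C : ℝ) (hc : 0 < c) (hC : 0 < C)
    (hlower : ∀ r : ℕ, 0 < r → ∀ x : Vd d, x ∈ cube d (2 * r) \ cube d r →
      c * euclNorm d x ^ ((2 : ℝ) - d)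
        ≤ (μ {ω | ConnIn d E ω Set.univ 0 x}).toReal)
    (hupper : ∀ r : ℕ, 0 < r →
      ∑ᶠ x ∈ cube d r, ∑ᶠ y ∈ cube d r,
        (μ ({ω | ConnIn d E ω Set.univ 0 x} ∩
            {ω | ConnIn d E ω Set.univ 0 y})).toReal
        ≤ C * (r : ℝ) ^ 6) :
    ∃ c' > (0 : ℝ), ∀ r : ℕ, 0 < r →
      c' / (r : ℝ) ^ 2
        ≤ (μ {ω | ∃ z ∈ inBdry d E r, ConnIn d E ω Set.univ 0 z}).toReal := by
  have : IsProbabilityMeasure μ := hbern.1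
  set c₁ := c * (2 * √d) ^ ((2 : ℝ) - d)
  refine ⟨c₁ ^ 2 / (64 * C), by positivity, fun r hr => ?_⟩
  set s := cubeFinset d (2 * r) \ cubeFinset d r
  have hfirst : c₁ * (r : ℝ) ^ 2 ≤ ∑ x ∈ s, μ.real {ω | ConnIn d E ω Set.univ 0 x} :=
    mul_sq_le_sum_annulus (by omega) hr hc.le (hlower r hr)
  have hsecond : ∑ x ∈ s, ∑ y ∈ s, μ.real ({ω | ConnIn d E ω Set.univ 0 x} ∩
      {ω | ConnIn d E ω Set.univ 0 y}) ≤ 64 * C * (r : ℝ) ^ 6 :=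
    (sum_sum_le_finsum_cube sdiff_subset fun _ _ => measureReal_nonneg).trans
      ((hupper (2 * r) (by omega)).trans_eq (by push_cast; ring))
  have hmoment := sq_sum_measureReal_le μ s (fun x => measurableSet_connIn d E Set.univ 0 x)
    (B := {ω | ∃ z ∈ inBdry d E r, ConnIn d E ω Set.univ 0 z}) fun x hx ω hω =>
      exists_inBdry_connIn (zero_mem_cube d r) (mem_cubeFinset.not.1 (mem_sdiff.1 hx).2) hω
  have hr' : (0 : ℝ) < r := by exact_mod_cast hr
  rw [← measureReal_def, div_div, div_le_iff₀ (by positivity)]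
  refine le_of_mul_le_mul_right ?_ (pow_pos hr' 4)
  calc c₁ ^ 2 * (r : ℝ) ^ 4 = (c₁ * (r : ℝ) ^ 2) ^ 2 := by ring
    _ ≤ (∑ x ∈ s, μ.real {ω | ConnIn d E ω Set.univ 0 x}) ^ 2 :=
        pow_le_pow_left₀ (by positivity) hfirst 2
    _ ≤ _ := hmoment.trans (mul_le_mul_of_nonneg_left hsecond measureReal_nonneg)
    _ = _ := by ring
end

section
/- Let d ≥ 1, and for x,y ∈ ℤ^d with |x|, |y| ≤ r√d and d > 6, Σ_{z ∈ ℤ^d, |z| > dr} |z|^{2−d}|x−z|^{2−d}|y−z|^{2−d} ≤ C r^{2d} Σ_{|z|>dr} |z|^{6−3d} ≤ C' r⁶. -/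
/-! For `|z| > d r ≥ 2 r √d` we have `|z| ≥ 2|x|`, hence `|x - z| ≥ |z| / 2`, and the summand
is at most `2^(2(d-2)) |z|^(6-3d)`; as `r ≥ 1` this gives the first inequality. For the second,
a tail `∑_{|z| > R} |z|^t` with `t < -d` is `O(R^(t+d))`: there are at most `2d·3^(d-1) n^(d-1)`
lattice points of sup-norm `n`, the sup-norm of `z` exceeds `R / √d`, and the integral test
bounds `∑_{n ≥ R/√d} n^(t+d-1)`. With `t = 6 - 3d` and `R = d r` the tail is `O(r^(6-2d))`. -/

open Finset

lemma two_mul_sqrt_le_self {a : ℝ} (ha : 4 ≤ a) : 2 * √a ≤ a := by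
  have h2 : 2 ≤ √a := Real.le_sqrt_of_sq_le (by linarith)
  nlinarith [Real.mul_self_sqrt (by linarith : (0 : ℝ) ≤ a)]

lemma pow_mul_rpow_sub_eq {r : ℝ} (hr : 0 < r) (a b : ℕ) :
    r ^ a * r ^ ((b : ℝ) - a) = r ^ b := by
  rw [← Real.rpow_natCast, ← Real.rpow_add hr, add_sub_cancel, Real.rpow_natCast]

theorem sum_natCast_rpow_le {q ρ : ℝ} (hq : q < -1) (hρ : 0 < ρ) (T : Finset ℕ)
    (hT : ∀ n ∈ T, ρ ≤ n) : ∑ n ∈ T, (n : ℝ) ^ q ≤ q / (q + 1) * ρ ^ (q + 1) := by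
  set m := ⌈ρ⌉₊
  have hm : (0 : ℝ) < m := hρ.trans_le (Nat.le_ceil ρ)
  set b := T.sup id ⊔ m
  have hTb : T ⊆ Ico m (b + 1) := fun n hn => mem_Ico.2
    ⟨Nat.ceil_le.2 (hT n hn), Nat.lt_succ_of_le (le_sup_of_le_left (le_sup (f := id) hn))⟩
  have hanti : AntitoneOn (fun x : ℝ => x ^ q) (Set.Icc m b) := fun x hx y _ hxy =>
    Real.rpow_le_rpow_of_nonpos (hm.trans_le hx.1) hxy (by linarith)
  calc ∑ n ∈ T, (n : ℝ) ^ q ≤ ∑ n ∈ Ico m (b + 1), (n : ℝ) ^ q :=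
        sum_le_sum_of_subset_of_nonneg hTb fun _ _ _ => by positivity
    _ = m ^ q + ∑ n ∈ Ico m b, ((n + 1 : ℕ) : ℝ) ^ q := by
        rw [sum_eq_sum_Ico_succ_bot (Nat.lt_succ_of_le le_sup_right),
          ← sum_Ico_add' (fun n : ℕ => (n : ℝ) ^ q)]
    _ ≤ m ^ q + ∫ x in Set.Ioi (m : ℝ), x ^ q := by
        gcongr
        exact hanti.sum_Ico_le_integral (integrableOn_Ioi_rpow_of_lt hq hm)
          fun t ht => Real.rpow_nonneg (hm.trans ht).le q
    _ ≤ m ^ (q + 1) - m ^ (q + 1) / (q + 1) := by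
        rw [integral_Ioi_rpow_of_lt hq hm, neg_div, ← sub_eq_add_neg]
        gcongr
        · exact Nat.one_le_cast.2 (Nat.ceil_pos.2 hρ)
        · linarith
    _ = q / (q + 1) * m ^ (q + 1) := by
        field_simp [show q + 1 ≠ 0 by linarith]
        ring
    _ ≤ q / (q + 1) * ρ ^ (q + 1) := by
        gcongr ?_ * ?_
        · exact div_nonneg_of_nonpos (by linarith) (by linarith)
        · exact Real.rpow_le_rpow_of_nonpos hρ (Nat.le_ceil ρ) (by linarith)

namespace Vd
variable {d : ℕ}

def toEuclidean (z : Vd d) : EuclideanSpace ℝ (Fin d) := WithLp.toLp 2 fun i => (z i : ℝ)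

lemma euclNorm_eq_norm (z : Vd d) : euclNorm d z = ‖toEuclidean z‖ := by
  simp [euclNorm, toEuclidean, EuclideanSpace.norm_eq]

lemma toEuclidean_sub (x z : Vd d) : toEuclidean (x - z) = toEuclidean x - toEuclidean z := by
  ext i
  simp [toEuclidean]

lemma euclNorm_nonneg (z : Vd d) : 0 ≤ euclNorm d z := Real.sqrt_nonneg _

lemma euclNorm_sub_euclNorm_le_rev (x z : Vd d) :
    euclNorm d z - euclNorm d x ≤ euclNorm d (x - z) := by
  rw [euclNorm_eq_norm, euclNorm_eq_norm, euclNorm_eq_norm, toEuclidean_sub, norm_sub_rev]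
  exact norm_sub_norm_le _ _

lemma abs_le_euclNorm (z : Vd d) (i : Fin d) : |(z i : ℝ)| ≤ euclNorm d z := by
  simpa [euclNorm_eq_norm, toEuclidean] using PiLp.norm_apply_le (toEuclidean z) i

def supNorm (z : Vd d) : ℕ := univ.sup fun i => (z i).natAbs

lemma abs_le_supNorm (z : Vd d) (i : Fin d) : |(z i : ℝ)| ≤ supNorm z := by
  rw [← Int.cast_abs, ← Int.natCast_natAbs]
  exact_mod_cast le_sup (f := fun i => (z i).natAbs) (mem_univ i)

lemma supNorm_le_euclNorm (z : Vd d) : (supNorm z : ℝ) ≤ euclNorm d z := by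
  rcases isEmpty_or_nonempty (Fin d) with h | h
  · simpa [supNorm] using euclNorm_nonneg z
  obtain ⟨i, -, hi⟩ := exists_mem_eq_sup univ univ_nonempty fun i => (z i).natAbs
  rw [supNorm, hi, Nat.cast_natAbs, Int.cast_abs]
  exact abs_le_euclNorm z i

lemma euclNorm_le_sqrt_mul_supNorm (z : Vd d) : euclNorm d z ≤ √d * supNorm z := by
  rw [euclNorm, ← Real.sqrt_sq (Nat.cast_nonneg (supNorm z)),
    ← Real.sqrt_mul (Nat.cast_nonneg d)]
  refine Real.sqrt_le_sqrt ?_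
  calc ∑ i, (z i : ℝ) ^ 2 ≤ ∑ _i : Fin d, (supNorm z : ℝ) ^ 2 := sum_le_sum fun i _ => by
        rw [← sq_abs]; gcongr; exact abs_le_supNorm z i
    _ = d * (supNorm z : ℝ) ^ 2 := by simp

noncomputable def box (d n : ℕ) : Finset (Vd d) := Fintype.piFinset fun _ => Icc (-(n : ℤ)) n

lemma mem_box {n : ℕ} {z : Vd d} : z ∈ box d n ↔ supNorm z ≤ n := by
  simp only [box, supNorm, Fintype.mem_piFinset, mem_Icc, Finset.sup_le_iff, mem_univ, true_imp_iff]
  exact forall_congr' fun i => by omega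

lemma card_box (n : ℕ) : #(box d n) = (2 * n + 1) ^ d := by
  simp only [box, Fintype.card_piFinset, Int.card_Icc, prod_const, card_univ, Fintype.card_fin]
  congr 1
  omega

noncomputable def shell (d n : ℕ) : Finset (Vd d) := (box d n).filter fun z => supNorm z = n

lemma card_shell_succ_le (n : ℕ) : #(shell d (n + 1)) ≤ 2 * d * (2 * n + 3) ^ (d - 1) := by
  have hsub : shell d (n + 1) ⊆ box d (n + 1) \ box d n := fun z hz => by
    simp only [shell, mem_filter] at hz
    simp [mem_sdiff, mem_box, hz.2]
  have hbox : box d n ⊆ box d (n + 1) := fun z hz => mem_box.2 ((mem_box.1 hz).trans n.le_succ)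
  refine (card_le_card hsub).trans ?_
  rw [card_sdiff_of_subset hbox, card_box, card_box, show 2 * (n + 1) + 1 = 2 * n + 3 by ring]
  have hle : (2 * n + 1) ^ d ≤ (2 * n + 3) ^ d := Nat.pow_le_pow_left (by omega) d
  zify [hle]
  calc ((2 * n + 3 : ℤ)) ^ d - (2 * n + 1) ^ d ≤ |(2 * n + 3 : ℤ) ^ d - (2 * n + 1) ^ d| :=
        le_abs_self _
    _ ≤ |(2 * n + 3 : ℤ) - (2 * n + 1)| * d * max |(2 * n + 3 : ℤ)| |2 * n + 1| ^ (d - 1) :=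
        abs_pow_sub_pow_le _ _ d
    _ = 2 * d * (2 * n + 3) ^ (d - 1) := by
        rw [max_eq_left (abs_le_abs (by omega) (by omega)),
          abs_of_nonneg (by omega : (0 : ℤ) ≤ 2 * n + 3)]
        norm_num

lemma card_shell_le {n : ℕ} (hn : 0 < n) :
    #(shell d n) ≤ 2 * d * 3 ^ (d - 1) * n ^ (d - 1) := by
  obtain ⟨k, rfl⟩ := Nat.exists_eq_add_one_of_ne_zero hn.ne'
  calc #(shell d (k + 1)) ≤ 2 * d * (2 * k + 3) ^ (d - 1) := card_shell_succ_le k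
    _ ≤ 2 * d * (3 * (k + 1)) ^ (d - 1) := by gcongr; omega
    _ = 2 * d * 3 ^ (d - 1) * (k + 1) ^ (d - 1) := by rw [mul_pow]; ring

lemma sum_supNorm_rpow_le (hd : 0 < d) {t : ℝ} (S : Finset (Vd d))
    (hS : ∀ z ∈ S, 0 < supNorm z) :
    ∑ z ∈ S, (supNorm z : ℝ) ^ t
      ≤ 2 * d * 3 ^ (d - 1) * ∑ n ∈ S.image supNorm, (n : ℝ) ^ (t + d - 1) := by
  rw [sum_comp (fun n : ℕ => (n : ℝ) ^ t), mul_sum]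
  refine sum_le_sum fun n hn => ?_
  obtain ⟨z, hzS, rfl⟩ := mem_image.1 hn
  have hpos : (0 : ℝ) < supNorm z := Nat.cast_pos.2 (hS z hzS)
  have hfiber : #(S.filter fun w => supNorm w = supNorm z) ≤ #(shell d (supNorm z)) :=
    card_le_card fun w hw => by
      rw [mem_filter] at hw
      exact mem_filter.2 ⟨mem_box.2 hw.2.le, hw.2⟩
  calc #(S.filter fun w => supNorm w = supNorm z) • (supNorm z : ℝ) ^ t
      ≤ (2 * d * 3 ^ (d - 1) * (supNorm z) ^ (d - 1) : ℕ) * (supNorm z : ℝ) ^ t := by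
        rw [nsmul_eq_mul]
        gcongr
        exact hfiber.trans (card_shell_le (hS z hzS))
    _ = 2 * d * 3 ^ (d - 1) * (supNorm z : ℝ) ^ (t + d - 1) := by
        have hpow : (supNorm z : ℝ) ^ (d - 1) = (supNorm z : ℝ) ^ ((d : ℝ) - 1) := by
          rw [← Real.rpow_natCast, Nat.cast_sub hd, Nat.cast_one]
        push_cast
        rw [hpow, add_sub_assoc, Real.rpow_add hpos]
        ring

theorem exists_sum_euclNorm_rpow_le (hd : 0 < d) {t : ℝ} (ht : t < -d) :
    ∃ K > 0, ∀ R > 0, ∀ S : Finset (Vd d), (∀ z ∈ S, R < euclNorm d z) →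
      ∑ z ∈ S, euclNorm d z ^ t ≤ K * R ^ (t + d) := by
  have hq : t + d - 1 < -1 := by linarith
  have hsqrt : 0 < √(d : ℝ) := Real.sqrt_pos.2 (Nat.cast_pos.2 hd)
  refine ⟨2 * d * 3 ^ (d - 1) * ((t + d - 1) / (t + d - 1 + 1)) / √d ^ (t + d), ?_,
    fun R hR S hS => ?_⟩
  · have : 0 < (t + d - 1) / (t + d - 1 + 1) := div_pos_of_neg_of_neg (by linarith) (by linarith)
    positivity
  have hsup : ∀ z ∈ S, R / √d < supNorm z := fun z hz => by
    rw [div_lt_iff₀' hsqrt]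
    exact (hS z hz).trans_le (euclNorm_le_sqrt_mul_supNorm z)
  calc ∑ z ∈ S, euclNorm d z ^ t ≤ ∑ z ∈ S, (supNorm z : ℝ) ^ t :=
        sum_le_sum fun z hz => Real.rpow_le_rpow_of_nonpos
          ((div_pos hR hsqrt).trans (hsup z hz)) (supNorm_le_euclNorm z) (by linarith)
    _ ≤ 2 * d * 3 ^ (d - 1) * ∑ n ∈ S.image supNorm, (n : ℝ) ^ (t + d - 1) :=
        sum_supNorm_rpow_le hd S fun z hz => Nat.cast_pos.1 ((div_pos hR hsqrt).trans (hsup z hz))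
    _ ≤ 2 * d * 3 ^ (d - 1) * ((t + d - 1) / (t + d - 1 + 1) * (R / √d) ^ (t + d - 1 + 1)) := by
        gcongr
        refine sum_natCast_rpow_le hq (div_pos hR hsqrt) _ fun n hn => ?_
        obtain ⟨z, hz, rfl⟩ := mem_image.1 hn
        exact (hsup z hz).le
    _ = _ := by
        rw [sub_add_cancel, Real.div_rpow hR.le hsqrt.le]
        ring

theorem exists_tsum_euclNorm_rpow_le (hd : 0 < d) {t : ℝ} (ht : t < -d) :
    ∃ K > 0, ∀ R > 0,
      Summable (fun z : {z : Vd d // R < euclNorm d z} => euclNorm d z.1 ^ t) ∧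
      ∑' z : {z : Vd d // R < euclNorm d z}, euclNorm d z.1 ^ t ≤ K * R ^ (t + d) := by
  obtain ⟨K, hK, hsum⟩ := exists_sum_euclNorm_rpow_le hd ht
  refine ⟨K, hK, fun R hR => ?_⟩
  have hS (S : Finset {z : Vd d // R < euclNorm d z}) :
      ∑ z ∈ S, euclNorm d z.1 ^ t ≤ K * R ^ (t + d) := by
    simpa using hsum R hR (S.map (.subtype _)) (by simp +contextual)
  have hnonneg (z : {z : Vd d // R < euclNorm d z}) : 0 ≤ euclNorm d z.1 ^ t :=
    Real.rpow_nonneg (euclNorm_nonneg _) t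
  exact ⟨summable_of_sum_le hnonneg hS, (summable_of_sum_le hnonneg hS).tsum_le_of_sum_le hS⟩

lemma euclNorm_sub_rpow_le {s : ℝ} (hs : s ≤ 0) {x z : Vd d} (hz : 0 < euclNorm d z)
    (hxz : 2 * euclNorm d x ≤ euclNorm d z) :
    euclNorm d (x - z) ^ s ≤ 2 ^ (-s) * euclNorm d z ^ s := by
  calc euclNorm d (x - z) ^ s ≤ (euclNorm d z / 2) ^ s :=
        Real.rpow_le_rpow_of_nonpos (half_pos hz)
          (by linarith [euclNorm_sub_euclNorm_le_rev x z]) hs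
    _ = 2 ^ (-s) * euclNorm d z ^ s := by
        rw [Real.div_rpow hz.le zero_le_two, Real.rpow_neg zero_le_two, div_eq_inv_mul]

lemma rpow_mul_euclNorm_sub_rpow_mul_le {s : ℝ} (hs : s ≤ 0) {x y z : Vd d}
    (hz : 0 < euclNorm d z) (hxz : 2 * euclNorm d x ≤ euclNorm d z)
    (hyz : 2 * euclNorm d y ≤ euclNorm d z) :
    euclNorm d z ^ s * euclNorm d (x - z) ^ s * euclNorm d (y - z) ^ s
      ≤ 2 ^ (-2 * s) * euclNorm d z ^ (3 * s) := by
  calc euclNorm d z ^ s * euclNorm d (x - z) ^ s * euclNorm d (y - z) ^ s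
      ≤ euclNorm d z ^ s * (2 ^ (-s) * euclNorm d z ^ s) * (2 ^ (-s) * euclNorm d z ^ s) := by
        gcongr
        · exact Real.rpow_nonneg (euclNorm_nonneg _) s
        · exact euclNorm_sub_rpow_le hs hz hxz
        · exact euclNorm_sub_rpow_le hs hz hyz
    _ = 2 ^ (-2 * s) * euclNorm d z ^ (3 * s) := by
        rw [show -2 * s = -s + -s by ring, show 3 * s = s + s + s by ring,
          Real.rpow_add zero_lt_two, Real.rpow_add hz, Real.rpow_add hz]
        ring

lemma two_mul_euclNorm_le_of_lt (hd : 4 ≤ d) {r : ℝ} (hr : 0 ≤ r) {x z : Vd d}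
    (hx : euclNorm d x ≤ r * √d) (hz : d * r < euclNorm d z) :
    2 * euclNorm d x ≤ euclNorm d z := by
  have := two_mul_sqrt_le_self (a := d) (by exact_mod_cast hd)
  nlinarith

lemma rpow_mul_euclNorm_sub_rpow_mul_le_of_lt (hd : 4 ≤ d) {r : ℝ} (hr : 0 ≤ r) {x y z : Vd d}
    (hx : euclNorm d x ≤ r * √d) (hy : euclNorm d y ≤ r * √d) (hz : d * r < euclNorm d z) :
    euclNorm d z ^ ((2 : ℝ) - d) * euclNorm d (x - z) ^ ((2 : ℝ) - d)
        * euclNorm d (y - z) ^ ((2 : ℝ) - d)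
      ≤ 2 ^ (-2 * ((2 : ℝ) - d)) * euclNorm d z ^ ((6 : ℝ) - 3 * d) := by
  have hd' : (4 : ℝ) ≤ d := by exact_mod_cast hd
  simpa only [show 3 * ((2 : ℝ) - d) = 6 - 3 * d by ring] using
    rpow_mul_euclNorm_sub_rpow_mul_le (s := 2 - d) (by linarith)
      ((by positivity : (0 : ℝ) ≤ d * r).trans_lt hz)
      (two_mul_euclNorm_le_of_lt hd hr hx hz) (two_mul_euclNorm_le_of_lt hd hr hy hz)

end Vd

/-- For `d > 6` and `|x|, |y| ≤ r√d`, the sum over `|z| > dr` of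
`|z|^{2−d}|x−z|^{2−d}|y−z|^{2−d}` is at most `C r^{2d} Σ_{|z|>dr}|z|^{6−3d}`,
which in turn is at most `C' r⁶`. -/
theorem stmt8 (d : ℕ) (hd : 6 < d) :
    ∃ C > (0 : ℝ), ∃ C' > (0 : ℝ), ∀ r : ℝ, 1 ≤ r → ∀ x y : Vd d,
      euclNorm d x ≤ r * Real.sqrt d → euclNorm d y ≤ r * Real.sqrt d →
      (Summable fun z : {z : Vd d // (d : ℝ) * r < euclNorm d z} =>
        euclNorm d z.1 ^ ((2 : ℝ) - d) * euclNorm d (x - z.1) ^ ((2 : ℝ) - d)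
          * euclNorm d (y - z.1) ^ ((2 : ℝ) - d)) ∧
      (Summable fun z : {z : Vd d // (d : ℝ) * r < euclNorm d z} =>
        euclNorm d z.1 ^ ((6 : ℝ) - 3 * d)) ∧
      (∑' z : {z : Vd d // (d : ℝ) * r < euclNorm d z},
        euclNorm d z.1 ^ ((2 : ℝ) - d) * euclNorm d (x - z.1) ^ ((2 : ℝ) - d)
          * euclNorm d (y - z.1) ^ ((2 : ℝ) - d))
        ≤ C * r ^ (2 * d) *
          ∑' z : {z : Vd d // (d : ℝ) * r < euclNorm d z},
            euclNorm d z.1 ^ ((6 : ℝ) - 3 * d) ∧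
      C * r ^ (2 * d) *
          (∑' z : {z : Vd d // (d : ℝ) * r < euclNorm d z},
            euclNorm d z.1 ^ ((6 : ℝ) - 3 * d))
        ≤ C' * r ^ 6 := by
  have hd' : (6 : ℝ) < d := by exact_mod_cast hd
  obtain ⟨K, hK, htail⟩ := Vd.exists_tsum_euclNorm_rpow_le (d := d) (by omega)
    (t := 6 - 3 * d) (by linarith)
  set C : ℝ := 2 ^ (-2 * ((2 : ℝ) - d))
  refine ⟨C, by positivity, C * K * (d : ℝ) ^ ((6 : ℝ) - 2 * d), by positivity,
    fun r hr x y hx hy => ?_⟩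
  have hr0 : 0 < r := one_pos.trans_le hr
  obtain ⟨hg, hgK⟩ := htail (d * r) (by positivity)
  set G := ∑' z : {z : Vd d // (d : ℝ) * r < euclNorm d z}, euclNorm d z.1 ^ ((6 : ℝ) - 3 * d)
  have hnonneg (w : Vd d) (s : ℝ) : 0 ≤ euclNorm d w ^ s :=
    Real.rpow_nonneg (Vd.euclNorm_nonneg w) s
  have hpt (z : {z : Vd d // (d : ℝ) * r < euclNorm d z}) :=
    Vd.rpow_mul_euclNorm_sub_rpow_mul_le_of_lt (by omega) hr0.le hx hy z.2
  have hf := (hg.mul_left C).of_nonneg_of_le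
    (fun z => mul_nonneg (mul_nonneg (hnonneg _ _) (hnonneg _ _)) (hnonneg _ _)) hpt
  refine ⟨hf, hg, ?_, ?_⟩
  · calc _ ≤ C * G := (hf.tsum_le_tsum hpt (hg.mul_left C)).trans_eq tsum_mul_left
      _ ≤ C * r ^ (2 * d) * G := by
          rw [mul_assoc]
          gcongr
          exact le_mul_of_one_le_left (tsum_nonneg fun z => hnonneg _ _) (one_le_pow₀ hr)
  · calc C * r ^ (2 * d) * G ≤ C * r ^ (2 * d) * (K * (d * r) ^ ((6 : ℝ) - 3 * d + d)) := by
          gcongr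
      _ = C * K * (d : ℝ) ^ ((6 : ℝ) - 2 * d) * r ^ 6 := by
          rw [Real.mul_rpow (by positivity) hr0.le, show (6 : ℝ) - 3 * d + d = 6 - 2 * d by ring,
            ← pow_mul_rpow_sub_eq hr0 (2 * d) 6]
          push_cast
          ring
end

section
/- Fix a constant C₁ > 0 and a nonnegative random variable X (the number of boundary points). Suppose for each i the conditional probability, given the exploration filtration F_{i−1} and the event that the exploration has not yet stopped, of discovering a boundary connection at step i is at least μ^{1/2} where μ = c₁ e^{−C₁ log² s} < 1/4. If X ≥ γ_i + μ^{1/2} min(i, τ) deterministically for the Doob martingale γ_i of indicators minus conditional probabilities, then P(μτ ≥ X ≥ N) ≤ (C/μ) e^{−cN} for absolute constants C, c > 0. -/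
open MeasureTheory ProbabilityTheory Real

/-! On the event `μ τ ≥ X ≥ N`, the hypothesis at `i = τ` gives
`γ_τ ≤ X - √μ τ ≤ -(√μ - μ) τ ≤ -(√μ / 2) τ` and `τ ≥ N / μ`. The Azuma–Hoeffding inequality
bounds `P(γ_i ≤ -(√μ / 2) i)` by `e^{-μ i / 8}`, and summing this over `i ≥ N / μ` gives
`(17 / μ) e^{-N / 16}`. Azuma–Hoeffding itself is the Chernoff bound applied to
`E e^{t γ_n} ≤ e^{n t² / 2}`, which follows inductively from the convexity bound
`e^{t x} ≤ cosh t + x sinh t` for `|x| ≤ 1`, since the martingale property kills the `sinh` term. -/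

lemma Real.inv_one_sub_exp_neg_le {x : ℝ} (hx : 0 < x) : (1 - exp (-x))⁻¹ ≤ 1 + x⁻¹ := by
  have h : x / (1 + x) ≤ 1 - exp (-x) := by
    have := add_one_le_exp x
    rw [exp_neg, div_le_iff₀ (by positivity)]
    field_simp
    nlinarith [exp_pos x]
  calc (1 - exp (-x))⁻¹ ≤ (x / (1 + x))⁻¹ := inv_anti₀ (by positivity) h
    _ = 1 + x⁻¹ := by field_simp; ring

lemma abs_le_of_abs_sub_le_one {a : ℕ → ℝ} (h₀ : a 0 = 0) (h : ∀ i, |a (i + 1) - a i| ≤ 1) :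
    ∀ n, |a n| ≤ n
  | 0 => by simp [h₀]
  | n + 1 => by
    have := abs_sub_abs_le_abs_sub (a (n + 1)) (a n)
    push_cast
    linarith [h n, abs_le_of_abs_sub_le_one h₀ h n]

theorem MeasureTheory.measureReal_iUnion_le_of_le_geometric {Ω : Type*} {m0 : MeasurableSpace Ω}
    {P : Measure Ω} [IsFiniteMeasure P] {A : ℕ → Set Ω} {a r : ℝ} (hr₀ : 0 ≤ r) (hr₁ : r < 1)
    (hA : ∀ i, P.real (A i) ≤ a * r ^ i) :
    P.real (⋃ i, A i) ≤ a * (1 - r)⁻¹ := by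
  have ha : 0 ≤ a := by simpa using measureReal_nonneg.trans (hA 0)
  have hsum := (summable_geometric_of_lt_one hr₀ hr₁).mul_left a
  refine ENNReal.toReal_le_of_le_ofReal (by positivity) ?_
  calc P (⋃ i, A i) ≤ ∑' i, P (A i) := measure_iUnion_le A
    _ ≤ ∑' i, ENNReal.ofReal (a * r ^ i) := ENNReal.tsum_le_tsum fun i ↦
        (ENNReal.le_ofReal_iff_toReal_le (measure_ne_top P _) (by positivity)).2 (hA i)
    _ = ENNReal.ofReal (a * (1 - r)⁻¹) := by
        rw [← ENNReal.ofReal_tsum_of_nonneg (fun i ↦ by positivity) hsum, tsum_mul_left,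
          tsum_geometric_of_lt_one hr₀ hr₁]

namespace MeasureTheory.Martingale

variable {Ω : Type*} {m0 : MeasurableSpace Ω} {P : Measure Ω} {ℱ : Filtration ℕ m0}
  {γ : ℕ → Ω → ℝ}

theorem integral_mul_eq [IsFiniteMeasure P] (hγ : Martingale γ ℱ P) {i j : ℕ} (hij : i ≤ j)
    {f : Ω → ℝ} (hf : StronglyMeasurable[ℱ i] f) (hfγ : Integrable (f * γ j) P) :
    ∫ ω, f ω * γ j ω ∂P = ∫ ω, f ω * γ i ω ∂P :=
  calc ∫ ω, f ω * γ j ω ∂P = ∫ ω, P[f * γ j | ℱ i] ω ∂P := (integral_condExp (ℱ.le i)).symm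
    _ = ∫ ω, f ω * γ i ω ∂P := integral_congr_ae <| by
      filter_upwards [condExp_mul_of_stronglyMeasurable_left hf hfγ (hγ.integrable j),
        hγ.condExp_ae_eq hij] with ω h₁ h₂
      simp [h₁, h₂]

variable (h₀ : ∀ ω, γ 0 ω = 0) (hinc : ∀ i ω, |γ (i + 1) ω - γ i ω| ≤ 1)
include h₀ hinc

theorem integrable_exp_mul [IsFiniteMeasure P] (hγ : Martingale γ ℱ P) (t : ℝ) (n : ℕ) :
    Integrable (fun ω ↦ exp (t * γ n ω)) P :=
  integrable_exp_mul_of_mem_Icc (hγ.integrable n).aemeasurable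
    (ae_of_all _ fun ω ↦ abs_le.1 (abs_le_of_abs_sub_le_one (a := (γ · ω)) (h₀ ω) (hinc · ω) n))

theorem integral_exp_mul_le [IsProbabilityMeasure P] (hγ : Martingale γ ℱ P) (t : ℝ) (n : ℕ) :
    ∫ ω, exp (t * γ n ω) ∂P ≤ exp (n * t ^ 2 / 2) := by
  induction n with
  | zero => simp [h₀]
  | succ n ih =>
    set f := fun ω ↦ exp (t * γ n ω) with hf_def
    have hf : StronglyMeasurable[ℱ n] f :=
      continuous_exp.comp_stronglyMeasurable ((hγ.stronglyMeasurable n).const_mul t)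
    have hf_bound : ∀ ω, ‖f ω‖ ≤ exp (|t| * n) := fun ω ↦ by
      rw [norm_of_nonneg (exp_nonneg _), exp_le_exp]
      calc t * γ n ω ≤ |t| * |γ n ω| := abs_mul t (γ n ω) ▸ le_abs_self _
        _ ≤ |t| * n := by gcongr; exact abs_le_of_abs_sub_le_one (a := (γ · ω)) (h₀ ω) (hinc · ω) n
    have hfγ : ∀ i, Integrable (fun ω ↦ f ω * γ i ω) P := fun i ↦
      (hγ.integrable i).bdd_mul (hf.mono (ℱ.le n)).aestronglyMeasurable (ae_of_all _ hf_bound)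
    have hf_int : Integrable f P := hγ.integrable_exp_mul h₀ hinc t n
    have hstep : ∀ ω, exp (t * γ (n + 1) ω)
        ≤ cosh t * f ω + sinh t * (f ω * γ (n + 1) ω - f ω * γ n ω) := fun ω ↦ by
      have h := exp_mul_le_cosh_add_mul_sinh (hinc n ω) t
      calc exp (t * γ (n + 1) ω) = f ω * exp ((γ (n + 1) ω - γ n ω) * t) := by
            rw [hf_def, ← exp_add]; ring_nf
        _ ≤ f ω * (cosh t + (γ (n + 1) ω - γ n ω) * sinh t) := by gcongr
        _ = _ := by ring
    calc ∫ ω, exp (t * γ (n + 1) ω) ∂P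
        ≤ ∫ ω, cosh t * f ω + sinh t * (f ω * γ (n + 1) ω - f ω * γ n ω) ∂P :=
          integral_mono (hγ.integrable_exp_mul h₀ hinc t _)
            ((hf_int.const_mul _).add (((hfγ _).sub (hfγ _)).const_mul _)) hstep
      _ = cosh t * ∫ ω, f ω ∂P := by
          rw [integral_add, integral_const_mul, integral_const_mul, integral_sub (hfγ _) (hfγ _),
            hγ.integral_mul_eq n.le_succ hf (hfγ _), sub_self, mul_zero, add_zero]
          exacts [hf_int.const_mul _, ((hfγ _).sub (hfγ _)).const_mul _]
      _ ≤ exp (t ^ 2 / 2) * exp (n * t ^ 2 / 2) :=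
          mul_le_mul (cosh_le_exp_half_sq t) ih (integral_nonneg fun _ ↦ exp_nonneg _)
            (exp_nonneg _)
      _ = exp ((n + 1 : ℕ) * t ^ 2 / 2) := by rw [← exp_add]; push_cast; ring_nf

theorem measureReal_le_neg_mul_le [IsProbabilityMeasure P] (hγ : Martingale γ ℱ P) (n : ℕ)
    {b : ℝ} (hb : 0 ≤ b) : P.real {ω | γ n ω ≤ -(b * n)} ≤ exp (-(b ^ 2 * n / 2)) :=
  calc P.real {ω | γ n ω ≤ -(b * n)}
      ≤ exp (-(-b) * -(b * n)) * mgf (γ n) P (-b) :=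
        measure_le_le_exp_mul_mgf _ (neg_nonpos.2 hb) (hγ.integrable_exp_mul h₀ hinc _ n)
    _ ≤ exp (-(-b) * -(b * n)) * exp (n * (-b) ^ 2 / 2) := by
        gcongr; exact hγ.integral_exp_mul_le h₀ hinc _ n
    _ = exp (-(b ^ 2 * n / 2)) := by rw [← exp_add]; ring_nf

theorem measureReal_exists_ge_and_le_neg_mul_le [IsProbabilityMeasure P] (hγ : Martingale γ ℱ P)
    {b : ℝ} (hb : 0 < b) (K : ℝ) :
    P.real {ω | ∃ i : ℕ, K ≤ i ∧ γ i ω ≤ -(b * i)}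
      ≤ exp (-(b ^ 2 * K / 4)) * (1 - exp (-(b ^ 2 / 4)))⁻¹ := by
  have hunion : {ω | ∃ i : ℕ, K ≤ i ∧ γ i ω ≤ -(b * i)}
      = ⋃ i : ℕ, {ω | K ≤ i ∧ γ i ω ≤ -(b * i)} := by
    ext; simp
  rw [hunion]
  refine measureReal_iUnion_le_of_le_geometric (exp_nonneg _)
    (exp_lt_one_iff.2 (neg_neg_of_pos (by positivity))) fun i ↦ ?_
  by_cases hi : K ≤ i
  · calc P.real {ω | K ≤ i ∧ γ i ω ≤ -(b * i)} ≤ P.real {ω | γ i ω ≤ -(b * i)} :=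
          measureReal_mono fun ω h ↦ h.2
      _ ≤ exp (-(b ^ 2 * i / 2)) := hγ.measureReal_le_neg_mul_le h₀ hinc i hb.le
      -- half of the exponent is spent on `i ≥ K`, the other half keeps the series geometric
      _ ≤ exp (-(b ^ 2 * K / 4)) * exp (-(b ^ 2 / 4)) ^ i := by
          rw [← exp_nat_mul, ← exp_add]
          gcongr
          nlinarith [sq_nonneg b]
  · simp only [hi, false_and, Set.ofPred_false, measureReal_empty]
    positivity

end MeasureTheory.Martingale

/-- The exploration-martingale estimate (Lemma 4.8 of Kozma–Nachmias, abstract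
form): there are absolute constants `C, c > 0` such that for any probability
space, any martingale `γ` (with `γ_0 = 0` and increments bounded by `1`) adapted
to a filtration with stopping time `τ`, any `μ = c₁ e^{−C₁ log² s} < 1/4`, and
any random variable `X` satisfying deterministically
`X ≥ γ_i + √μ · min(i, τ)` for all `i`, one has
`P(μτ ≥ X ≥ N) ≤ (C/μ) e^{−cN}`. -/
theorem stmt9 :
    ∃ C > (0 : ℝ), ∃ c > (0 : ℝ),
      ∀ (Ω : Type) (m0 : MeasurableSpace Ω) (P : Measure Ω),
        IsProbabilityMeasure P →
        ∀ (ℱ : Filtration ℕ m0) (γ : ℕ → Ω → ℝ),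
          Martingale γ ℱ P → (∀ ω, γ 0 ω = 0) →
          (∀ (i : ℕ) ω, |γ (i + 1) ω - γ i ω| ≤ 1) →
          ∀ τ : Ω → ℕ, IsStoppingTime ℱ (fun ω => (τ ω : WithTop ℕ)) →
          ∀ c₁ C₁ s μc : ℝ, 0 < c₁ → 0 < C₁ → 2 ≤ s →
            μc = c₁ * Real.exp (-C₁ * (Real.log s) ^ 2) → μc < 1 / 4 →
          ∀ X : Ω → ℝ,
            (∀ (i : ℕ) ω, γ i ω + Real.sqrt μc * min (i : ℝ) (τ ω : ℝ) ≤ X ω) →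
          ∀ N : ℝ, 0 < N →
            (P {ω | μc * (τ ω : ℝ) ≥ X ω ∧ X ω ≥ N}).toReal
              ≤ (C / μc) * Real.exp (-c * N) := by
  refine ⟨17, by norm_num, 1 / 16, by norm_num, ?_⟩
  intro Ω m0 P _ ℱ γ hγ h₀ hinc τ _ c₁ C₁ s μ hc₁ _ _ hμ_def hμ X hX N hN
  have hμ₀ : 0 < μ := hμ_def ▸ mul_pos hc₁ (exp_pos _)
  have hμ_le : μ ≤ √μ / 2 := by
    have : √μ < 1 / 2 := by rw [sqrt_lt' (by norm_num)]; linarith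
    nlinarith [sq_sqrt hμ₀.le, sqrt_nonneg μ]
  have hcover : {ω | μ * (τ ω : ℝ) ≥ X ω ∧ X ω ≥ N}
      ⊆ {ω | ∃ i : ℕ, N / μ ≤ i ∧ γ i ω ≤ -(√μ / 2 * i)} := by
    rintro ω ⟨hτX, hXN⟩
    have h := hX (τ ω) ω
    rw [min_self] at h
    refine ⟨τ ω, (div_le_iff₀' hμ₀).2 (hXN.trans hτX), ?_⟩
    nlinarith [(τ ω).cast_nonneg (α := ℝ)]
  have hb : (√μ / 2) ^ 2 = μ / 4 := by rw [div_pow, sq_sqrt hμ₀.le]; norm_num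
  calc (P {ω | μ * (τ ω : ℝ) ≥ X ω ∧ X ω ≥ N}).toReal
      ≤ P.real {ω | ∃ i : ℕ, N / μ ≤ i ∧ γ i ω ≤ -(√μ / 2 * i)} := measureReal_mono hcover
    _ ≤ exp (-((√μ / 2) ^ 2 * (N / μ) / 4)) * (1 - exp (-((√μ / 2) ^ 2 / 4)))⁻¹ :=
      hγ.measureReal_exists_ge_and_le_neg_mul_le h₀ hinc (by positivity) _
    _ = exp (-N / 16) * (1 - exp (-(μ / 16)))⁻¹ := by
      rw [hb]; congr 3 <;> field_simp <;> norm_num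
    _ ≤ exp (-N / 16) * (1 + (μ / 16)⁻¹) := by gcongr; exact inv_one_sub_exp_neg_le (by positivity)
    _ ≤ 17 / μ * exp (-(1 / 16) * N) := by
      rw [mul_comm, neg_mul, one_div_mul_eq_div, neg_div]
      gcongr
      rw [inv_div, add_div' _ _ _ hμ₀.ne', div_le_div_iff_of_pos_right hμ₀]
      linarith
end

section
/- Deterministic trichotomy for the second moment: if pairs (x₁,y₁) and (x₂,y₂) are both admissible (meaning 0 ↔ x_i inside Q_j, x_i ↔ y_i, and the boundary edge (x_i, x̃_i) is pivotal for 0 ↔ y_i), then either (i) x₁ = x₂ and y₁ = y₂; or (ii) x₁ = x₂, y₁ ≠ y₂, and there exists z such that {0 ↔ x₁ inside Q_j} ∘ {x₁ ↔ z} ∘ {z ↔ y₁} ∘ {z ↔ y₂} occurs; or (iii) x₁ ≠ x₂ and {0 ↔ x₁ inside Q_j, 0 ↔ x₂ inside Q_j} ∘ {x₁ ↔ y₁} ∘ {x₂ ↔ y₂} occurs. -/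
/-!
Close both boundary edges `e₁ = s(x₁, xt₁)` and `e₂ = s(x₂, xt₂)`. Connections from `0` inside
`Q_j` survive, while pivotality forces `yᵢ` into the cluster `Aᵢ` of `xtᵢ`, which is disjoint
from the cluster of `0`. If `e₁ ≠ e₂`, then `A₁` and `A₂` are disjoint as well: otherwise `y₂`
could be reached from `0` through `e₁` with `e₂` closed. Disjoint occurrence is then witnessed by
the open edges of the in-cube cluster of `0` and by each `eᵢ` together with the open edges of
`Aᵢ`. If `e₁ = e₂`, both `y₁` and `y₂` lie in `A₁`; a self-avoiding path from `xt₁` to `y₁` and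
the last exit from it of a path from `xt₁` to `y₂` give the triple point `z`.
-/

open MeasureTheory ProbabilityTheory
/-- Disjoint occurrence of finitely many events on a configuration space:
there exist pairwise disjoint edge sets certifying each event. -/
def MultiDisjOcc {ι : Type*} {n : ℕ} (A : Fin n → Set (ι → Bool)) :
    Set (ι → Bool) :=
  {ω | ∃ U : Fin n → Set ι, (∀ j k, j ≠ k → Disjoint (U j) (U k)) ∧
    ∀ j, ∀ ω', (∀ e ∈ U j, ω' e = ω e) → ω' ∈ A j}

/-- The configuration `ω` with the edge `e` closed. -/
def closeEdge (d : ℕ) (e : Sym2 (Vd d)) (ω : Config d) : Config d :=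
  fun e' => if e' = e then false else ω e'

/-- The edge `e` is pivotal for the event `0 ↔ y` in the configuration `ω`. -/
def PivotalFor (d : ℕ) (E : Set (Sym2 (Vd d))) (e : Sym2 (Vd d))
    (ω : Config d) (y : Vd d) : Prop :=
  ConnIn d E ω Set.univ 0 y ∧ ¬ ConnIn d E (closeEdge d e ω) Set.univ 0 y

/-- The pair `(x, y)` (with chosen outside neighbour `xt` of `x`) is admissible:
`x ∈ ∂Q_j`, `0 ↔ x` inside `Q_j`, `x ↔ y`, and the boundary edge `(x, xt)` is
pivotal for `0 ↔ y`. -/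
def Admissible (d : ℕ) (E : Set (Sym2 (Vd d))) (ω : Config d) (j : ℕ)
    (x y xt : Vd d) : Prop :=
  x ∈ inBdry d E j ∧ xt ∉ cube d j ∧ s(x, xt) ∈ E ∧
  ConnIn d E ω (cube d j) 0 x ∧ ConnIn d E ω Set.univ x y ∧
  PivotalFor d E s(x, xt) ω y

variable {d : ℕ} {E : Set (Sym2 (Vd d))}

namespace ConnIn

variable {ω ω' : Config d} {S T : Set (Vd d)} {a b c : Vd d}

theorem refl (ha : a ∈ S) : ConnIn d E ω S a a :=
  ⟨0, fun _ => a, rfl, rfl, fun _ _ => ha, fun _ h => absurd h (Nat.not_lt_zero _)⟩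

theorem cons (he : s(a, c) ∈ E) (ho : ω s(a, c) = true) (ha : a ∈ S)
    (h : ConnIn d E ω S c b) : ConnIn d E ω S a b := by
  obtain ⟨n, γ, h0, hn, hS, hγ⟩ := h
  refine ⟨n + 1, fun i => Nat.casesOn i a γ, rfl, hn, ?_, ?_⟩
  · rintro (_ | i) hi
    exacts [ha, hS i (by omega)]
  · rintro (_ | i) hi
    · show s(a, γ 0) ∈ E ∧ ω s(a, γ 0) = true
      exact h0 ▸ ⟨he, ho⟩
    · exact hγ i (by omega)

theorem trans (hab : ConnIn d E ω S a b) (hbc : ConnIn d E ω S b c) : ConnIn d E ω S a c := by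
  obtain ⟨n, γ, rfl, hn, hS, hγ⟩ := hab
  induction n generalizing γ with
  | zero => exact hn ▸ hbc
  | succ n ih =>
    exact cons (hγ 0 n.succ_pos).1 (hγ 0 n.succ_pos).2 (hS 0 (Nat.zero_le _))
      (ih (fun i => γ (i + 1)) hn (fun i hi => hS (i + 1) (by omega))
        (fun i hi => hγ (i + 1) (by omega)))

theorem symm (h : ConnIn d E ω S a b) : ConnIn d E ω S b a := by
  obtain ⟨n, γ, h0, hn, hS, hγ⟩ := h
  refine ⟨n, fun i => γ (n - i), by simpa using hn, by simpa using h0,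
    fun i _ => hS _ (Nat.sub_le _ _), fun i hi => ?_⟩
  have hsucc : n - i = n - (i + 1) + 1 := by omega
  simp only [hsucc, Sym2.eq_swap (a := γ (n - (i + 1) + 1))]
  exact hγ _ (by omega)

theorem mono (hle : ∀ e, ω e = true → ω' e = true) (h : ConnIn d E ω S a b) :
    ConnIn d E ω' S a b := by
  obtain ⟨n, γ, h0, hn, hS, hγ⟩ := h
  exact ⟨n, γ, h0, hn, hS, fun i hi => ⟨(hγ i hi).1, hle _ (hγ i hi).2⟩⟩

theorem mono_set (hST : S ⊆ T) (h : ConnIn d E ω S a b) : ConnIn d E ω T a b := by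
  obtain ⟨n, γ, h0, hn, hS, hγ⟩ := h
  exact ⟨n, γ, h0, hn, fun i hi => hST (hS i hi), hγ⟩

theorem mem_right (h : ConnIn d E ω S a b) : b ∈ S := by
  obtain ⟨n, γ, -, rfl, hS, -⟩ := h
  exact hS n le_rfl

theorem of_mem_edge {u v : Vd d} (he : s(u, v) ∈ E) (ho : ω s(u, v) = true) {w w' : Vd d}
    (hw : w ∈ s(u, v)) (hw' : w' ∈ s(u, v)) (h : ConnIn d E ω Set.univ a w) :
    ConnIn d E ω Set.univ a w' := by
  have huv : ConnIn d E ω Set.univ u v := cons he ho trivial (refl trivial)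
  rcases Sym2.mem_iff.1 hw with rfl | rfl <;> rcases Sym2.mem_iff.1 hw' with rfl | rfl
  exacts [h, h.trans huv, h.trans huv.symm, h]

theorem exists_lost_edge (h : ConnIn d E ω S a b) (h' : ¬ ConnIn d E ω' S a b) :
    ∃ u v, s(u, v) ∈ E ∧ ω s(u, v) = true ∧ ω' s(u, v) = false ∧ ConnIn d E ω' S v b := by
  obtain ⟨n, γ, rfl, hn, hS, hγ⟩ := h
  induction n generalizing γ with
  | zero => exact absurd (hn ▸ refl (hS 0 le_rfl)) h'
  | succ n ih =>
    by_cases h1 : ConnIn d E ω' S (γ 1) b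
    · refine ⟨γ 0, γ 1, (hγ 0 n.succ_pos).1, (hγ 0 n.succ_pos).2, ?_, h1⟩
      by_contra ho
      exact h' (cons (hγ 0 n.succ_pos).1 (by simpa using ho) (hS 0 (Nat.zero_le _)) h1)
    · exact ih (fun i => γ (i + 1)) h1 hn (fun i hi => hS (i + 1) (by omega))
        (fun i hi => hγ (i + 1) (by omega))

theorem exists_injOn_path (h : ConnIn d E ω S a b) :
    ∃ n γ, γ 0 = a ∧ γ n = b ∧ (∀ i ≤ n, γ i ∈ S) ∧
      (∀ i < n, s(γ i, γ (i + 1)) ∈ E ∧ ω s(γ i, γ (i + 1)) = true) ∧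
      Set.InjOn γ (Set.Iic n) := by
  obtain ⟨n, γ, h0, hn, hS, hγ⟩ := h
  induction n using Nat.strong_induction_on generalizing γ with
  | _ n ih =>
  by_cases hinj : Set.InjOn γ (Set.Iic n)
  · exact ⟨n, γ, h0, hn, hS, hγ, hinj⟩
  obtain ⟨i, j, hij, hjn, heq⟩ : ∃ i j, i < j ∧ j ≤ n ∧ γ i = γ j := by
    simp only [Set.InjOn, Set.mem_Iic, not_forall] at hinj
    obtain ⟨i, hi, j, hj, heq, hne⟩ := hinj
    rcases Nat.lt_or_gt_of_ne hne with hlt | hlt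
    exacts [⟨i, j, hlt, hj, heq⟩, ⟨j, i, hlt, hi, heq.symm⟩]
  -- cut out the loop `γ i, …, γ j`
  set τ : ℕ → ℕ := fun k => if k ≤ i then k else k + (j - i)
  have hτ : ∀ k, γ (τ k) = γ (if k < i then k else k + (j - i)) ∧
      τ (k + 1) = (if k < i then k else k + (j - i)) + 1 := by
    intro k
    simp only [τ]
    split_ifs <;> first
      | exact ⟨congrArg γ (by omega), by omega⟩
      | exact ⟨(congrArg γ (by omega)).trans (heq.trans (congrArg γ (by omega))), by omega⟩
  refine ih (n - (j - i)) (by omega) (γ ∘ τ) (by simp [τ, h0]) ?_ ?_ ?_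
  · show γ (τ (n - (j - i))) = b
    simp only [τ]
    split_ifs
    · rw [show n - (j - i) = i by omega, heq, show j = n by omega, hn]
    · rw [show n - (j - i) + (j - i) = n by omega, hn]
  · intro k hk
    simp only [Function.comp, τ]
    split_ifs <;> exact hS _ (by omega)
  · intro k hk
    simp only [Function.comp, (hτ k).1, (hτ k).2]
    split_ifs <;> exact hγ _ (by omega)

end ConnIn

def pathEdges (γ : ℕ → Vd d) (k l : ℕ) : Set (Sym2 (Vd d)) :=
  (fun t => s(γ t, γ (t + 1))) '' Set.Ico k l

def clusterEdges (d : ℕ) (E : Set (Sym2 (Vd d))) (ω : Config d) (S : Set (Vd d))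
    (a : Vd d) : Set (Sym2 (Vd d)) :=
  {e | ω e = true ∧ ∀ v ∈ e, ConnIn d E ω S a v}

def WitnessesConn (d : ℕ) (E : Set (Sym2 (Vd d))) (S : Set (Vd d))
    (U : Set (Sym2 (Vd d))) (a b : Vd d) : Prop :=
  ∀ ω : Config d, (∀ e ∈ U, ω e = true) → ConnIn d E ω S a b

section Witnesses

variable {ω : Config d} {S : Set (Vd d)} {a b c : Vd d}

theorem WitnessesConn.insert {U : Set (Sym2 (Vd d))} (he : s(a, c) ∈ E) (ha : a ∈ S)
    (h : WitnessesConn d E S U c b) : WitnessesConn d E S (insert s(a, c) U) a b :=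
  fun ω hω => .cons he (hω _ (Set.mem_insert _ _)) ha
    (h ω fun e he => hω e (Set.mem_insert_of_mem _ he))

theorem witnessesConn_clusterEdges (h : ConnIn d E ω S a b) :
    WitnessesConn d E S (clusterEdges d E ω S a) a b := by
  intro ω' hω'
  obtain ⟨n, γ, h0, hn, hS, hγ⟩ := h
  have hpre : ∀ i ≤ n, ConnIn d E ω S a (γ i) := fun i hi =>
    ⟨i, γ, h0, rfl, fun k hk => hS k (hk.trans hi), fun k hk => hγ k (by omega)⟩
  refine ⟨n, γ, h0, hn, hS, fun i hi => ⟨(hγ i hi).1, hω' _ ⟨(hγ i hi).2, fun v hv => ?_⟩⟩⟩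
  rcases Sym2.mem_iff.1 hv with rfl | rfl
  exacts [hpre i hi.le, hpre (i + 1) hi]

variable {γ : ℕ → Vd d} {n k l : ℕ}

theorem witnessesConn_pathEdges (hS : ∀ i ≤ n, γ i ∈ S)
    (hE : ∀ i < n, s(γ i, γ (i + 1)) ∈ E) (hkl : k ≤ l) (hl : l ≤ n) :
    WitnessesConn d E S (pathEdges γ k l) (γ k) (γ l) := fun ω hω =>
  ⟨l - k, fun t => γ (k + t), by simp, by simp [Nat.add_sub_cancel' hkl],
    fun t ht => hS _ (by omega),
    fun t ht => ⟨hE _ (by omega), hω _ ⟨k + t, ⟨by omega, by omega⟩, rfl⟩⟩⟩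

theorem connIn_of_path (hS : ∀ i ≤ n, γ i ∈ S)
    (hγ : ∀ i < n, s(γ i, γ (i + 1)) ∈ E ∧ ω s(γ i, γ (i + 1)) = true) (hkl : k ≤ l)
    (hl : l ≤ n) : ConnIn d E ω S (γ k) (γ l) :=
  witnessesConn_pathEdges hS (fun i hi => (hγ i hi).1) hkl hl ω <| by
    rintro _ ⟨t, ⟨-, ht⟩, rfl⟩
    exact (hγ t (by omega)).2

theorem pathEdges_subset_clusterEdges (hS : ∀ i ≤ n, γ i ∈ S)
    (hγ : ∀ i < n, s(γ i, γ (i + 1)) ∈ E ∧ ω s(γ i, γ (i + 1)) = true) (hl : l ≤ n) :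
    pathEdges γ k l ⊆ clusterEdges d E ω S (γ 0) := by
  rintro _ ⟨t, ⟨-, ht⟩, rfl⟩
  refine ⟨(hγ t (by omega)).2, fun v hv => ?_⟩
  rcases Sym2.mem_iff.1 hv with rfl | rfl
  exacts [connIn_of_path hS hγ (Nat.zero_le _) (by omega),
    connIn_of_path hS hγ (Nat.zero_le _) (by omega)]

theorem ConnIn.exists_tripod (hb : ConnIn d E ω S a b) (hc : ConnIn d E ω S a c) :
    ∃ z, ∃ U₁ U₂ U₃ : Set (Sym2 (Vd d)),
      U₁ ∪ U₂ ∪ U₃ ⊆ clusterEdges d E ω S a ∧ Disjoint U₁ U₂ ∧ Disjoint (U₁ ∪ U₂) U₃ ∧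
      WitnessesConn d E S U₁ a z ∧ WitnessesConn d E S U₂ z b ∧
      WitnessesConn d E S U₃ z c := by
  classical
  obtain ⟨n, γ, rfl, rfl, hγS, hγ, hinj⟩ := hb.exists_injOn_path
  obtain ⟨m, δ, hδ0, rfl, hδS, hδ⟩ := hc
  -- `δ` leaves the self-avoiding path `γ` for good at time `k`, from `z = δ k = γ i`
  set k := Nat.findGreatest (fun k => ∃ i ≤ n, δ k = γ i) m
  obtain ⟨i, hin, hki⟩ : ∃ i ≤ n, δ k = γ i :=
    Nat.findGreatest_spec (P := fun k => ∃ i ≤ n, δ k = γ i) (Nat.zero_le m)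
      ⟨0, Nat.zero_le n, hδ0⟩
  have hkm : k ≤ m := Nat.findGreatest_le m
  have hfresh : ∀ t, k < t → t ≤ m → ∀ i ≤ n, δ t ≠ γ i := fun t hkt htm i hi h =>
    Nat.findGreatest_is_greatest hkt htm ⟨i, hi, h⟩
  have hγE : ∀ i < n, s(γ i, γ (i + 1)) ∈ E := fun i hi => (hγ i hi).1
  refine ⟨γ i, pathEdges γ 0 i, pathEdges γ i n, pathEdges δ k m, ?_, ?_, ?_,
    witnessesConn_pathEdges hγS hγE (Nat.zero_le i) hin,
    witnessesConn_pathEdges hγS hγE hin le_rfl,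
    hki ▸ witnessesConn_pathEdges hδS (fun i hi => (hδ i hi).1) hkm le_rfl⟩
  · refine Set.union_subset (Set.union_subset ?_ ?_) ?_
    · exact pathEdges_subset_clusterEdges hγS hγ hin
    · exact pathEdges_subset_clusterEdges hγS hγ le_rfl
    · exact hδ0 ▸ pathEdges_subset_clusterEdges hδS hδ le_rfl
  · rw [Set.disjoint_left]
    rintro _ ⟨t, ⟨-, hti⟩, rfl⟩ ⟨t', ⟨hit', ht'n⟩, hedge⟩
    have hmem : γ t ∈ s(γ t', γ (t' + 1)) := by
      rw [show s(γ t', γ (t' + 1)) = s(γ t, γ (t + 1)) from hedge]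
      exact Sym2.mem_mk_left _ _
    rcases Sym2.mem_iff.1 hmem with h | h <;>
    · have := hinj (Set.mem_Iic.2 (by omega)) (Set.mem_Iic.2 (by omega)) h
      omega
  · rw [Set.disjoint_left]
    rintro _ hP ⟨t, ⟨hkt, htm⟩, rfl⟩
    obtain ⟨t', ⟨-, ht'⟩, hedge⟩ : s(δ t, δ (t + 1)) ∈ pathEdges γ 0 n := by
      rcases hP with ⟨t', ⟨h0, h1⟩, he⟩ | ⟨t', ⟨h0, h1⟩, he⟩
      exacts [⟨t', ⟨h0, by omega⟩, he⟩, ⟨t', ⟨Nat.zero_le _, h1⟩, he⟩]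
    have hmem : δ (t + 1) ∈ s(γ t', γ (t' + 1)) := by
      rw [show s(γ t', γ (t' + 1)) = s(δ t, δ (t + 1)) from hedge]
      exact Sym2.mem_mk_right _ _
    rcases Sym2.mem_iff.1 hmem with h | h
    exacts [hfresh _ (by omega) htm _ (by omega) h, hfresh _ (by omega) htm _ (by omega) h]

end Witnesses

theorem mem_multiDisjOcc_of_witnesses {ι : Type*} {n : ℕ} {A : Fin n → Set (ι → Bool)}
    {ω : ι → Bool} (U : Fin n → Set ι) (hU : Pairwise fun k l => Disjoint (U k) (U l))
    (hopen : ∀ k, ∀ e ∈ U k, ω e = true)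
    (hA : ∀ k ω', (∀ e ∈ U k, ω' e = true) → ω' ∈ A k) : ω ∈ MultiDisjOcc A :=
  ⟨U, hU, fun k ω' hω' => hA k ω' fun e he => (hω' e he).trans (hopen k e he)⟩

section PairwiseDisjoint

variable {α : Type*} [PartialOrder α] [OrderBot α] {a₀ a₁ a₂ a₃ : α}

theorem pairwise_disjoint_vecCons₃ (h01 : Disjoint a₀ a₁) (h02 : Disjoint a₀ a₂)
    (h12 : Disjoint a₁ a₂) : Pairwise fun k l => Disjoint (![a₀, a₁, a₂] k) (![a₀, a₁, a₂] l) := by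
  simp [pairwise_fin_succ_iff, Fin.forall_fin_succ, h01, h02, h12, h01.symm, h02.symm, h12.symm]

theorem pairwise_disjoint_vecCons₄ (h01 : Disjoint a₀ a₁) (h02 : Disjoint a₀ a₂)
    (h03 : Disjoint a₀ a₃) (h12 : Disjoint a₁ a₂) (h13 : Disjoint a₁ a₃) (h23 : Disjoint a₂ a₃) :
    Pairwise fun k l => Disjoint (![a₀, a₁, a₂, a₃] k) (![a₀, a₁, a₂, a₃] l) := by
  simp [pairwise_fin_succ_iff, Fin.forall_fin_succ, h01, h02, h03, h12, h13, h23, h01.symm,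
    h02.symm, h03.symm, h12.symm, h13.symm, h23.symm]

end PairwiseDisjoint

theorem disjoint_clusterEdges {ω ω' : Config d} {S T : Set (Vd d)} {a b : Vd d}
    (h : ∀ v, ConnIn d E ω S a v → ¬ ConnIn d E ω' T b v) :
    Disjoint (clusterEdges d E ω S a) (clusterEdges d E ω' T b) := by
  rw [Set.disjoint_left]
  rintro e ⟨-, he⟩ ⟨-, he'⟩
  induction e using Sym2.ind with
  | _ u w => exact h u (he u (Sym2.mem_mk_left _ _)) (he' u (Sym2.mem_mk_left _ _))

section CloseEdge

variable {ω : Config d} {e f : Sym2 (Vd d)}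

@[simp]
theorem closeEdge_eq_true_iff : closeEdge d e ω f = true ↔ f ≠ e ∧ ω f = true := by
  unfold closeEdge
  split_ifs with h <;> simp [h]

theorem closeEdge_le (h : closeEdge d e ω f = true) : ω f = true :=
  (closeEdge_eq_true_iff.1 h).2

theorem closeEdge_self : closeEdge d e ω e = false := by
  simp [closeEdge]

theorem closeEdge_comm {e' : Sym2 (Vd d)} :
    closeEdge d e (closeEdge d e' ω) = closeEdge d e' (closeEdge d e ω) := by
  funext f
  unfold closeEdge
  split_ifs <;> rfl

theorem eq_of_closeEdge_eq_false (hopen : ω f = true) (hclosed : closeEdge d e ω f = false) :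
    f = e := by
  by_contra hne
  simp [closeEdge, hne, hopen] at hclosed

theorem PivotalFor.edge_open {y : Vd d} (h : PivotalFor d E e ω y) : ω e = true := by
  by_contra hclosed
  refine h.2 (h.1.mono fun f hf => closeEdge_eq_true_iff.2 ⟨?_, hf⟩)
  rintro rfl
  exact hclosed hf

theorem ConnIn.closeEdge_of_not_mem {S : Set (Vd d)} {a b v : Vd d} (hv : v ∈ e)
    (hvS : v ∉ S) (h : ConnIn d E ω S a b) : ConnIn d E (closeEdge d e ω) S a b := by
  obtain ⟨n, γ, h0, hn, hS, hγ⟩ := h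
  refine ⟨n, γ, h0, hn, hS, fun i hi => ⟨(hγ i hi).1, closeEdge_eq_true_iff.2 ⟨?_, (hγ i hi).2⟩⟩⟩
  rintro rfl
  rcases Sym2.mem_iff.1 hv with rfl | rfl
  exacts [hvS (hS i hi.le), hvS (hS (i + 1) hi)]

theorem ConnIn.closeEdge_of_not_connIn {a b c u : Vd d} (h : ConnIn d E ω Set.univ a b)
    (hu : u ∈ e) (hcu : ConnIn d E ω Set.univ c u) (hcb : ¬ ConnIn d E ω Set.univ c b) :
    ConnIn d E (closeEdge d e ω) Set.univ a b := by
  by_contra h'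
  obtain ⟨v, w, hE, hopen, hclosed, hwb⟩ := h.exists_lost_edge h'
  obtain rfl := eq_of_closeEdge_eq_false hopen hclosed
  exact hcb ((hcu.of_mem_edge hE hopen hu (Sym2.mem_mk_right v w)).trans
    (hwb.mono fun _ => closeEdge_le))

theorem PivotalFor.connIn_closeEdge {x xt y : Vd d} (h : PivotalFor d E s(x, xt) ω y)
    (hx : ConnIn d E (closeEdge d s(x, xt) ω) Set.univ 0 x) :
    ConnIn d E (closeEdge d s(x, xt) ω) Set.univ xt y := by
  obtain ⟨u, v, -, hopen, hclosed, hvy⟩ := h.1.exists_lost_edge h.2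
  rcases Sym2.eq_iff.1 (eq_of_closeEdge_eq_false hopen hclosed) with ⟨-, rfl⟩ | ⟨-, rfl⟩
  exacts [hvy, absurd (hx.trans hvy) h.2]

end CloseEdge

def hangingEdges (d : ℕ) (E : Set (Sym2 (Vd d))) (ω : Config d) (x xt x' xt' : Vd d) :
    Set (Sym2 (Vd d)) :=
  insert s(x, xt) (clusterEdges d E (closeEdge d s(x', xt') (closeEdge d s(x, xt) ω)) Set.univ xt)

namespace Admissible

variable {ω : Config d} {j : ℕ} {x y xt x' y' xt' v : Vd d}

theorem mem_cube (h : Admissible d E ω j x y xt) : x ∈ cube d j := h.1.1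

theorem not_mem_cube (h : Admissible d E ω j x y xt) : xt ∉ cube d j := h.2.1

theorem edge_mem (h : Admissible d E ω j x y xt) : s(x, xt) ∈ E := h.2.2.1

theorem connIn_zero (h : Admissible d E ω j x y xt) : ConnIn d E ω (cube d j) 0 x := h.2.2.2.1

theorem pivotalFor (h : Admissible d E ω j x y xt) : PivotalFor d E s(x, xt) ω y :=
  h.2.2.2.2.2

theorem connIn_zero_closeEdge (h : Admissible d E ω j x y xt) {ω' : Config d}
    (hv : ConnIn d E ω' (cube d j) 0 v) :
    ConnIn d E (closeEdge d s(x, xt) ω') (cube d j) 0 v :=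
  hv.closeEdge_of_not_mem (Sym2.mem_mk_right _ _) h.not_mem_cube

theorem connIn_zero_closeEdge_closeEdge (h : Admissible d E ω j x y xt)
    (h' : Admissible d E ω j x' y' xt') (hv : ConnIn d E ω (cube d j) 0 v) :
    ConnIn d E (closeEdge d s(x', xt') (closeEdge d s(x, xt) ω)) Set.univ 0 v :=
  (h'.connIn_zero_closeEdge (h.connIn_zero_closeEdge hv)).mono_set (Set.subset_univ _)

theorem connIn_closeEdge_closeEdge (h : Admissible d E ω j x y xt)
    (h' : Admissible d E ω j x' y' xt') :
    ConnIn d E (closeEdge d s(x', xt') (closeEdge d s(x, xt) ω)) Set.univ xt y := by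
  have hcut : ∀ {v}, ConnIn d E ω (cube d j) 0 v →
      ConnIn d E (closeEdge d s(x, xt) ω) Set.univ 0 v := fun hv =>
    (h.connIn_zero_closeEdge hv).mono_set (Set.subset_univ _)
  exact (h.pivotalFor.connIn_closeEdge (hcut h.connIn_zero)).closeEdge_of_not_connIn
    (Sym2.mem_mk_left x' xt') (hcut h'.connIn_zero) h.pivotalFor.2

theorem not_connIn_of_connIn_zero (h : Admissible d E ω j x y xt)
    (h' : Admissible d E ω j x' y' xt')
    (h0v : ConnIn d E (closeEdge d s(x', xt') (closeEdge d s(x, xt) ω)) Set.univ 0 v) :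
    ¬ ConnIn d E (closeEdge d s(x', xt') (closeEdge d s(x, xt) ω)) Set.univ xt v := fun hxtv =>
  h.pivotalFor.2 <| ((h0v.trans hxtv.symm).trans (h.connIn_closeEdge_closeEdge h')).mono
    fun _ => closeEdge_le

theorem not_connIn_of_ne (h : Admissible d E ω j x y xt) (h' : Admissible d E ω j x' y' xt')
    (hne : s(x, xt) ≠ s(x', xt'))
    (hv : ConnIn d E (closeEdge d s(x', xt') (closeEdge d s(x, xt) ω)) Set.univ xt v) :
    ¬ ConnIn d E (closeEdge d s(x', xt') (closeEdge d s(x, xt) ω)) Set.univ xt' v := by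
  intro hv'
  have hy' := h'.connIn_closeEdge_closeEdge h
  rw [closeEdge_comm] at hy'
  -- with only `s(x', xt')` closed, `0 ↔ x — xt ↔ v ↔ xt' ↔ y'` contradicts its pivotality
  have hle : ∀ f, closeEdge d s(x', xt') (closeEdge d s(x, xt) ω) f = true →
      closeEdge d s(x', xt') ω f = true := by
    intro f hf
    simp only [closeEdge_eq_true_iff] at hf ⊢
    exact ⟨hf.1, hf.2.2⟩
  have hx : ConnIn d E (closeEdge d s(x', xt') ω) Set.univ 0 x :=
    (h'.connIn_zero_closeEdge h.connIn_zero).mono_set (Set.subset_univ _)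
  have hopen : closeEdge d s(x', xt') ω s(x, xt) = true :=
    closeEdge_eq_true_iff.2 ⟨hne, h.pivotalFor.edge_open⟩
  exact h'.pivotalFor.2 <|
    hx.trans (.cons h.edge_mem hopen trivial (((hv.trans hv'.symm).trans hy').mono hle))

theorem hangingEdges_subset (h : Admissible d E ω j x y xt) :
    hangingEdges d E ω x xt x' xt' ⊆ {f | ω f = true} :=
  Set.insert_subset h.pivotalFor.edge_open fun _ hf => closeEdge_le (closeEdge_le hf.1)

theorem witnessesConn_hangingEdges (h : Admissible d E ω j x y xt)
    (h' : Admissible d E ω j x' y' xt') :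
    WitnessesConn d E Set.univ (hangingEdges d E ω x xt x' xt') x y :=
  (witnessesConn_clusterEdges (h.connIn_closeEdge_closeEdge h')).insert h.edge_mem trivial

theorem disjoint_clusterEdges_hangingEdges (h : Admissible d E ω j x y xt)
    (h' : Admissible d E ω j x' y' xt') :
    Disjoint (clusterEdges d E ω (cube d j) 0) (hangingEdges d E ω x xt x' xt') :=
  Set.disjoint_insert_right.2
    ⟨fun hZ => h.not_mem_cube (hZ.2 xt (Sym2.mem_mk_right _ _)).mem_right,
      disjoint_clusterEdges fun _ h0v =>
        h.not_connIn_of_connIn_zero h' (h.connIn_zero_closeEdge_closeEdge h' h0v)⟩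

theorem edge_not_mem_clusterEdges (h : Admissible d E ω j x y xt)
    (h' : Admissible d E ω j x' y' xt') :
    s(x', xt') ∉ clusterEdges d E (closeEdge d s(x', xt') (closeEdge d s(x, xt) ω)) Set.univ xt :=
  fun hA => h.not_connIn_of_connIn_zero h' (h.connIn_zero_closeEdge_closeEdge h' h'.connIn_zero)
    (hA.2 x' (Sym2.mem_mk_left _ _))

theorem disjoint_hangingEdges (h : Admissible d E ω j x y xt)
    (h' : Admissible d E ω j x' y' xt') (hne : s(x, xt) ≠ s(x', xt')) :
    Disjoint (hangingEdges d E ω x xt x' xt') (hangingEdges d E ω x' xt' x xt) := by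
  refine Set.disjoint_insert_left.2 ⟨fun hm => hm.elim hne (h'.edge_not_mem_clusterEdges h),
    Set.disjoint_insert_right.2 ⟨h.edge_not_mem_clusterEdges h', ?_⟩⟩
  rw [closeEdge_comm (e := s(x, xt))]
  exact disjoint_clusterEdges fun _ hv => h.not_connIn_of_ne h' hne hv

theorem eq_of_edge_eq (h : Admissible d E ω j x y xt) (h' : Admissible d E ω j x' y' xt')
    (he : s(x, xt) = s(x', xt')) : x = x' ∧ xt = xt' := by
  rcases Sym2.eq_iff.1 he with hxx | ⟨hx, -⟩
  · exact hxx
  · exact absurd (hx ▸ h.mem_cube) h'.not_mem_cube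

theorem mem_multiDisjOcc_of_ne (h : Admissible d E ω j x y xt)
    (h' : Admissible d E ω j x' y' xt') (hne : s(x, xt) ≠ s(x', xt')) :
    ω ∈ MultiDisjOcc
      ![{ω' : Config d | ConnIn d E ω' (cube d j) 0 x ∧ ConnIn d E ω' (cube d j) 0 x'},
        {ω' | ConnIn d E ω' Set.univ x y}, {ω' | ConnIn d E ω' Set.univ x' y'}] := by
  refine mem_multiDisjOcc_of_witnesses ![clusterEdges d E ω (cube d j) 0,
    hangingEdges d E ω x xt x' xt', hangingEdges d E ω x' xt' x xt] ?_ ?_ ?_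
  · exact pairwise_disjoint_vecCons₃ (h.disjoint_clusterEdges_hangingEdges h')
      (h'.disjoint_clusterEdges_hangingEdges h) (h.disjoint_hangingEdges h' hne)
  · intro k
    fin_cases k
    exacts [fun _ he => he.1, h.hangingEdges_subset, h'.hangingEdges_subset]
  · intro k
    fin_cases k
    exacts [fun ω' hω' => ⟨witnessesConn_clusterEdges h.connIn_zero ω' hω',
        witnessesConn_clusterEdges h'.connIn_zero ω' hω'⟩,
      h.witnessesConn_hangingEdges h', h'.witnessesConn_hangingEdges h]

theorem mem_multiDisjOcc_of_ne_right (h : Admissible d E ω j x y xt)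
    (h' : Admissible d E ω j x y' xt') (hne : xt ≠ xt') :
    ω ∈ MultiDisjOcc
      ![{ω' : Config d | ConnIn d E ω' (cube d j) 0 x}, {ω' | ConnIn d E ω' Set.univ x x},
        {ω' | ConnIn d E ω' Set.univ x y}, {ω' | ConnIn d E ω' Set.univ x y'}] := by
  have hne' : s(x, xt) ≠ s(x, xt') := fun he => hne (Sym2.congr_right.1 he)
  refine mem_multiDisjOcc_of_witnesses ![clusterEdges d E ω (cube d j) 0, ∅,
    hangingEdges d E ω x xt x xt', hangingEdges d E ω x xt' x xt] ?_ ?_ ?_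
  · exact pairwise_disjoint_vecCons₄ (Set.disjoint_empty _)
      (h.disjoint_clusterEdges_hangingEdges h') (h'.disjoint_clusterEdges_hangingEdges h)
      (Set.empty_disjoint _) (Set.empty_disjoint _) (h.disjoint_hangingEdges h' hne')
  · intro k
    fin_cases k
    exacts [fun _ he => he.1, fun _ he => he.elim, h.hangingEdges_subset, h'.hangingEdges_subset]
  · intro k
    fin_cases k
    exacts [witnessesConn_clusterEdges h.connIn_zero, fun _ _ => .refl trivial,
      h.witnessesConn_hangingEdges h', h'.witnessesConn_hangingEdges h]

theorem exists_mem_multiDisjOcc (h : Admissible d E ω j x y xt)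
    (h' : Admissible d E ω j x y' xt) :
    ∃ z, ω ∈ MultiDisjOcc
      ![{ω' : Config d | ConnIn d E ω' (cube d j) 0 x}, {ω' | ConnIn d E ω' Set.univ x z},
        {ω' | ConnIn d E ω' Set.univ z y}, {ω' | ConnIn d E ω' Set.univ z y'}] := by
  obtain ⟨z, U₁, U₂, U₃, hsub, h12, h3, hw₁, hw₂, hw₃⟩ :=
    (h.connIn_closeEdge_closeEdge h).exists_tripod (h'.connIn_closeEdge_closeEdge h)
  have hA : ∀ {U}, U ⊆ U₁ ∪ U₂ ∪ U₃ → U ⊆ hangingEdges d E ω x xt x xt :=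
    fun hU _ he => Set.mem_insert_of_mem _ (hsub (hU he))
  have hW₁ : insert s(x, xt) U₁ ⊆ hangingEdges d E ω x xt x xt :=
    Set.insert_subset (Set.mem_insert _ _) (hA fun _ he => by simp [he])
  have hW₂ : U₂ ⊆ hangingEdges d E ω x xt x xt := hA fun _ he => by simp [he]
  have hW₃ : U₃ ⊆ hangingEdges d E ω x xt x xt := hA fun _ he => by simp [he]
  have hclosed : s(x, xt) ∉ U₁ ∪ U₂ ∪ U₃ := fun he => by
    simpa [closeEdge_self] using (hsub he).1
  have hZ := h.disjoint_clusterEdges_hangingEdges h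
  refine ⟨z, mem_multiDisjOcc_of_witnesses ![clusterEdges d E ω (cube d j) 0,
    insert s(x, xt) U₁, U₂, U₃] ?_ ?_ ?_⟩
  · exact pairwise_disjoint_vecCons₄ (hZ.mono_right hW₁) (hZ.mono_right hW₂)
      (hZ.mono_right hW₃) (Set.disjoint_insert_left.2 ⟨fun he => hclosed (by simp [he]), h12⟩)
      (Set.disjoint_insert_left.2 ⟨fun he => hclosed (by simp [he]),
        h3.mono_left Set.subset_union_left⟩)
      (h3.mono_left Set.subset_union_right)
  · intro k
    fin_cases k
    exacts [fun _ he => he.1, hW₁.trans h.hangingEdges_subset, hW₂.trans h.hangingEdges_subset,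
      hW₃.trans h.hangingEdges_subset]
  · intro k
    fin_cases k
    exacts [witnessesConn_clusterEdges h.connIn_zero, hw₁.insert h.edge_mem trivial, hw₂, hw₃]

end Admissible

/-- Deterministic trichotomy for the second-moment estimate: if `(x₁,y₁)` and
`(x₂,y₂)` are both admissible, then either they coincide; or `x₁ = x₂`,
`y₁ ≠ y₂` and for some `z` the events `{0 ↔ x₁ in Q_j}`, `{x₁ ↔ z}`, `{z ↔ y₁}`,
`{z ↔ y₂}` occur disjointly; or `x₁ ≠ x₂` and
`{0 ↔ x₁ in Q_j, 0 ↔ x₂ in Q_j}`, `{x₁ ↔ y₁}`, `{x₂ ↔ y₂}` occur disjointly. -/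
theorem stmt18 (d : ℕ) (E : Set (Sym2 (Vd d))) (ω : Config d) (j : ℕ)
    (x₁ y₁ xt₁ x₂ y₂ xt₂ : Vd d)
    (h1 : Admissible d E ω j x₁ y₁ xt₁)
    (h2 : Admissible d E ω j x₂ y₂ xt₂) :
    (x₁ = x₂ ∧ y₁ = y₂) ∨
    (x₁ = x₂ ∧ y₁ ≠ y₂ ∧ ∃ z : Vd d,
      ω ∈ MultiDisjOcc
        ![{ω' : Config d | ConnIn d E ω' (cube d j) 0 x₁},
          {ω' | ConnIn d E ω' Set.univ x₁ z},
          {ω' | ConnIn d E ω' Set.univ z y₁},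
          {ω' | ConnIn d E ω' Set.univ z y₂}]) ∨
    (x₁ ≠ x₂ ∧
      ω ∈ MultiDisjOcc
        ![{ω' : Config d | ConnIn d E ω' (cube d j) 0 x₁ ∧
            ConnIn d E ω' (cube d j) 0 x₂},
          {ω' | ConnIn d E ω' Set.univ x₁ y₁},
          {ω' | ConnIn d E ω' Set.univ x₂ y₂}]) := by
  by_cases hx : x₁ = x₂
  · subst hx
    by_cases hy : y₁ = y₂
    · exact Or.inl ⟨rfl, hy⟩
    refine Or.inr (Or.inl ⟨rfl, hy, ?_⟩)
    by_cases hxt : xt₁ = xt₂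
    · subst hxt
      exact h1.exists_mem_multiDisjOcc h2
    · exact ⟨x₁, h1.mem_multiDisjOcc_of_ne_right h2 hxt⟩
  · exact Or.inr (Or.inr ⟨hx, h1.mem_multiDisjOcc_of_ne h2 fun he => hx (h1.eq_of_edge_eq h2 he).1⟩)
end
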